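/- arXiv:2104.05679 — 9 statements merged into one kernel-verified Lean document; each statement's English description precedes it below -/
import Mathlib

section
/- For every p ∈ (1, ∞) and every function v in W^{1,p}_0(0,1) (i.e., v absolutely continuous on [0,1] with v(0) = v(1) = 0 and v' ∈ L^p(0,1)), one has ∫₀¹ |v(x)|^p dx ≤ (1/(p·2^p)) · ∫₀¹ |v'(x)|^p dx. -/
open MeasureTheory intervalIntegral

/-- Hölder's inequality on an interval with the second function constant 1. -/
lemma holder_interval (p q : ℝ) (hpq : Real.HolderConjugate p q) (f : ℝ → ℝ) (a b : ℝ)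
    (hab : a ≤ b)
    (hf : IntervalIntegrable f volume a b)
    (hfp : IntervalIntegrable (fun x => |f x| ^ p) volume a b) :
    ∫ x in a..b, |f x| ≤ (b - a) ^ (1/q) * (∫ x in a..b, |f x| ^ p) ^ (1/p) := by
  set μ := volume.restrict (Set.Ioc a b) with hμ
  have hmeas : AEStronglyMeasurable (fun x => |f x|) μ := hf.1.aestronglyMeasurable.norm
  have hintp : Integrable (fun x => |f x| ^ p) μ := hfp.1
  have hmem : MemLp (fun x => |f x|) (ENNReal.ofReal p) μ := by
    have h := (memLp_norm_rpow_iff (q := ENNReal.ofReal p) (p := ENNReal.ofReal p)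
      hmeas (by simp [ENNReal.ofReal_eq_zero]; linarith [hpq.lt]) (by simp)).mp
    rw [ENNReal.div_self (by simp [ENNReal.ofReal_eq_zero]; linarith [hpq.lt]) (by simp)] at h
    apply h
    rw [memLp_one_iff_integrable]
    have : (fun x => ‖|f x|‖ ^ (ENNReal.ofReal p).toReal) = fun x => |f x| ^ p := by
      funext x
      rw [ENNReal.toReal_ofReal hpq.nonneg, Real.norm_eq_abs, abs_abs]
    rw [this]
    exact hintp
  have hmem1 : MemLp (fun _ : ℝ => (1 : ℝ)) (ENNReal.ofReal q) μ := by
    apply memLp_const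
  have H := integral_mul_le_Lp_mul_Lq_of_nonneg (μ := μ) hpq
    (f := fun x => |f x|) (g := fun _ => 1)
    (Filter.Eventually.of_forall fun x => abs_nonneg _)
    (Filter.Eventually.of_forall fun x => zero_le_one) hmem hmem1
  simp only [mul_one, Real.one_rpow] at H
  have hμs : ∫ _ : ℝ, (1 : ℝ) ∂μ = b - a := by
    rw [hμ, setIntegral_const, smul_eq_mul, mul_one, Real.volume_real_Ioc_of_le hab]
  rw [hμs] at H
  rw [intervalIntegral.integral_of_le hab, intervalIntegral.integral_of_le hab]
  calc ∫ x in Set.Ioc a b, |f x| = ∫ x in Set.Ioc a b, |f x| * 1 := by simp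
    _ ≤ (∫ x in Set.Ioc a b, |f x| ^ p) ^ (1/p) * (b - a) ^ (1/q) := by
        simpa using H
    _ = (b - a) ^ (1/q) * (∫ x in Set.Ioc a b, |f x| ^ p) ^ (1/p) := mul_comm _ _

/-- The "left half" Poincaré estimate. -/
lemma poincare_half (p q : ℝ) (hpq : Real.HolderConjugate p q) (v v' : ℝ → ℝ)
    (hAC : ∀ x ∈ Set.Icc (0:ℝ) 1, v x = ∫ t in (0:ℝ)..x, v' t)
    (hint : IntervalIntegrable v' volume 0 1)
    (hLp : IntervalIntegrable (fun x => |v' x| ^ p) volume 0 1) :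
    ∫ x in (0:ℝ)..(1/2), |v x| ^ p
      ≤ ((1/2:ℝ) ^ p / p) * ∫ x in (0:ℝ)..(1/2), |v' x| ^ p := by
  have hp := hpq.lt
  set A := ∫ x in (0:ℝ)..(1/2), |v' x| ^ p with hA
  have hA0 : 0 ≤ A := by
    rw [hA]
    apply intervalIntegral.integral_nonneg (by norm_num)
    intro x _
    positivity
  -- pointwise bound on [0, 1/2]
  have hpt : ∀ x ∈ Set.Icc (0:ℝ) (1/2), |v x| ^ p ≤ x ^ (p - 1) * A := by
    intro x hx
    obtain ⟨hx0, hx1⟩ := hx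
    have hx1' : x ≤ 1 := by linarith
    have hintx : IntervalIntegrable v' volume 0 x := by
      apply hint.mono_set
      rw [Set.uIcc_of_le hx0, Set.uIcc_of_le (by norm_num : (0:ℝ) ≤ 1)]
      exact Set.Icc_subset_Icc le_rfl hx1'
    have hLpx : IntervalIntegrable (fun t => |v' t| ^ p) volume 0 x := by
      apply hLp.mono_set
      rw [Set.uIcc_of_le hx0, Set.uIcc_of_le (by norm_num : (0:ℝ) ≤ 1)]
      exact Set.Icc_subset_Icc le_rfl hx1'
    have hLph : IntervalIntegrable (fun t => |v' t| ^ p) volume 0 (1/2) := by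
      apply hLp.mono_set
      rw [Set.uIcc_of_le (by norm_num : (0:ℝ) ≤ 1/2), Set.uIcc_of_le (by norm_num : (0:ℝ) ≤ 1)]
      exact Set.Icc_subset_Icc le_rfl (by norm_num)
    have h1 : |v x| ≤ ∫ t in (0:ℝ)..x, |v' t| := by
      rw [hAC x ⟨hx0, hx1'⟩]
      exact intervalIntegral.abs_integral_le_integral_abs hx0
    have h2 : ∫ t in (0:ℝ)..x, |v' t|
        ≤ (x - 0) ^ (1/q) * (∫ t in (0:ℝ)..x, |v' t| ^ p) ^ (1/p) :=
      holder_interval p q hpq v' 0 x hx0 hintx hLpx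
    have h3 : (∫ t in (0:ℝ)..x, |v' t| ^ p) ≤ A := by
      rw [hA]
      apply intervalIntegral.integral_mono_interval le_rfl hx0 hx1
      · exact Filter.Eventually.of_forall fun t => by positivity
      · exact hLph
    have hIx0 : 0 ≤ ∫ t in (0:ℝ)..x, |v' t| ^ p := by
      apply intervalIntegral.integral_nonneg hx0
      intro t _; positivity
    have h4 : |v x| ≤ x ^ (1/q) * A ^ (1/p) := by
      calc |v x| ≤ (x - 0) ^ (1/q) * (∫ t in (0:ℝ)..x, |v' t| ^ p) ^ (1/p) := h1.trans h2
        _ = x ^ (1/q) * (∫ t in (0:ℝ)..x, |v' t| ^ p) ^ (1/p) := by rw [sub_zero]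
        _ ≤ x ^ (1/q) * A ^ (1/p) := by
            apply mul_le_mul_of_nonneg_left _ (Real.rpow_nonneg hx0 _)
            exact Real.rpow_le_rpow hIx0 h3 (by positivity)
    calc |v x| ^ p ≤ (x ^ (1/q) * A ^ (1/p)) ^ p := by
          apply Real.rpow_le_rpow (abs_nonneg _) h4 (by positivity)
      _ = x ^ (p - 1) * A := by
          rw [Real.mul_rpow (Real.rpow_nonneg hx0 _) (Real.rpow_nonneg hA0 _),
            ← Real.rpow_mul hx0, ← Real.rpow_mul hA0]
          have hq : 1/q = 1 - 1/p := by
            have := hpq.inv_add_inv_eq_one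
            rw [one_div, one_div]; linarith
          have hp0 : p ≠ 0 := by positivity
          have e1 : 1/q * p = p - 1 := by rw [hq]; field_simp
          have e2 : 1/p * p = 1 := by field_simp
          rw [e1, e2, Real.rpow_one]
  -- integrate the pointwise bound
  have hcv : ContinuousOn v (Set.Icc (0:ℝ) 1) := by
    have h1 : IntegrableOn v' (Set.uIcc (0:ℝ) 1) volume := by
      rw [Set.uIcc_of_le (by norm_num : (0:ℝ) ≤ 1)]
      exact (intervalIntegrable_iff_integrableOn_Icc_of_le (by norm_num)).mp hint
    have h2 := intervalIntegral.continuousOn_primitive_interval (a := (0:ℝ)) (b := (1:ℝ)) h1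
    rw [Set.uIcc_of_le (by norm_num : (0:ℝ) ≤ 1)] at h2
    exact h2.congr hAC
  have hvint : IntervalIntegrable (fun x => |v x| ^ p) volume 0 (1/2) := by
    apply ContinuousOn.intervalIntegrable
    rw [Set.uIcc_of_le (by norm_num : (0:ℝ) ≤ 1/2)]
    have hsub : Set.Icc (0:ℝ) (1/2) ⊆ Set.Icc (0:ℝ) 1 := Set.Icc_subset_Icc le_rfl (by norm_num)
    have : ContinuousOn (fun y : ℝ => |y| ^ p) Set.univ := by
      apply Continuous.continuousOn
      exact continuous_abs.rpow_const fun x => Or.inr (by positivity)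
    exact this.comp (hcv.mono hsub) (Set.mapsTo_univ _ _)
  have hrint : IntervalIntegrable (fun x : ℝ => x ^ (p - 1) * A) volume 0 (1/2) := by
    apply IntervalIntegrable.mul_const
    exact intervalIntegrable_rpow (Or.inl (by linarith))
  calc ∫ x in (0:ℝ)..(1/2), |v x| ^ p
      ≤ ∫ x in (0:ℝ)..(1/2), x ^ (p - 1) * A := by
        apply intervalIntegral.integral_mono_on (by norm_num) hvint hrint
        intro x hx
        exact hpt x hx
    _ = (∫ x in (0:ℝ)..(1/2), x ^ (p - 1)) * A := by
        rw [intervalIntegral.integral_mul_const]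
    _ = ((1/2:ℝ) ^ p / p) * A := by
        rw [integral_rpow (Or.inl (by linarith))]
        have e : p - 1 + 1 = p := by ring
        rw [e, Real.zero_rpow (by positivity : p ≠ 0)]
        ring

/-- Poincaré inequality with explicit constant 1/(p·2^p) on W^{1,p}_0(0,1):
`v` is absolutely continuous on [0,1] with density `v'`, vanishes at 0 and 1,
and `|v'|^p` is integrable. -/
theorem poincare_explicit_constant (p : ℝ) (hp : 1 < p)
    (v v' : ℝ → ℝ)
    (hAC : ∀ x ∈ Set.Icc (0:ℝ) 1, v x = ∫ t in (0:ℝ)..x, v' t)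
    (hint : IntervalIntegrable v' volume 0 1)
    (hLp : IntervalIntegrable (fun x => |v' x| ^ p) volume 0 1)
    (hv0 : v 0 = 0) (hv1 : v 1 = 0) :
    ∫ x in (0:ℝ)..1, |v x| ^ p ≤ (1 / (p * 2 ^ p)) * ∫ x in (0:ℝ)..1, |v' x| ^ p := by
  have hp0 : (0:ℝ) < p := by linarith
  set q := p / (p - 1) with hqdef
  have hpq : p.HolderConjugate q := Real.HolderConjugate.conjExponent hp
  -- the reflected function
  set u : ℝ → ℝ := fun x => v (1 - x) with hu
  set u' : ℝ → ℝ := fun x => -v' (1 - x) with hu'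
  have hv1int : (∫ t in (0:ℝ)..1, v' t) = 0 := by
    rw [← hAC 1 (by norm_num : (1:ℝ) ∈ Set.Icc (0:ℝ) 1)]; exact hv1
  have hint_sub : ∀ x ∈ Set.Icc (0:ℝ) 1, IntervalIntegrable v' volume 0 x := by
    intro x hx
    apply hint.mono_set
    rw [Set.uIcc_of_le hx.1, Set.uIcc_of_le (by norm_num : (0:ℝ) ≤ 1)]
    exact Set.Icc_subset_Icc le_rfl hx.2
  have hAC_u : ∀ x ∈ Set.Icc (0:ℝ) 1, u x = ∫ t in (0:ℝ)..x, u' t := by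
    intro x hx
    have hx' : (1 - x) ∈ Set.Icc (0:ℝ) 1 := ⟨by linarith [hx.2], by linarith [hx.1]⟩
    have e1 : (∫ t in (0:ℝ)..x, u' t) = -∫ t in (0:ℝ)..x, v' (1 - t) := by
      rw [hu']
      exact intervalIntegral.integral_neg
    have e2 : (∫ t in (0:ℝ)..x, v' (1 - t)) = ∫ t in (1-x)..1, v' t := by
      have := intervalIntegral.integral_comp_sub_left (a := (0:ℝ)) (b := x) v' 1
      simpa using this
    have e3 : (∫ t in (1-x)..1, v' t)
        = (∫ t in (0:ℝ)..1, v' t) - ∫ t in (0:ℝ)..(1-x), v' t :=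
      (intervalIntegral.integral_interval_sub_left hint (hint_sub _ hx')).symm
    rw [e1, e2, e3, hv1int, ← hAC (1-x) hx', hu]
    ring
  have hint_u : IntervalIntegrable u' volume 0 1 := by
    have := (hint.comp_sub_left 1).symm
    simp only [sub_zero, sub_self] at this
    exact this.neg
  have hLp_u : IntervalIntegrable (fun x => |u' x| ^ p) volume 0 1 := by
    have := (hLp.comp_sub_left 1).symm
    simp only [sub_zero, sub_self] at this
    simpa [hu', abs_neg] using this
  have half1 := poincare_half p q hpq v v' hAC hint hLp
  have half2 := poincare_half p q hpq u u' hAC_u hint_u hLp_u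
  -- rewrite the reflected integrals
  have eu : (∫ x in (0:ℝ)..(1/2), |u x| ^ p) = ∫ x in (1/2:ℝ)..1, |v x| ^ p := by
    have := intervalIntegral.integral_comp_sub_left (a := (0:ℝ)) (b := (1/2:ℝ))
      (fun t => |v t| ^ p) 1
    simp only [sub_zero] at this
    rw [hu]
    convert this using 2
    norm_num
  have eu' : (∫ x in (0:ℝ)..(1/2), |u' x| ^ p) = ∫ x in (1/2:ℝ)..1, |v' x| ^ p := by
    have := intervalIntegral.integral_comp_sub_left (a := (0:ℝ)) (b := (1/2:ℝ))
      (fun t => |v' t| ^ p) 1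
    simp only [sub_zero] at this
    have e : (fun x => |u' x| ^ p) = fun x => |v' (1 - x)| ^ p := by
      funext x; rw [hu', abs_neg]
    rw [e]
    convert this using 2
    norm_num
  rw [eu, eu'] at half2
  -- integrability of the two halves
  have hcv : ContinuousOn v (Set.Icc (0:ℝ) 1) := by
    have h1 : IntegrableOn v' (Set.uIcc (0:ℝ) 1) volume := by
      rw [Set.uIcc_of_le (by norm_num : (0:ℝ) ≤ 1)]
      exact (intervalIntegrable_iff_integrableOn_Icc_of_le (by norm_num)).mp hint
    have h2 := intervalIntegral.continuousOn_primitive_interval (a := (0:ℝ)) (b := (1:ℝ)) h1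
    rw [Set.uIcc_of_le (by norm_num : (0:ℝ) ≤ 1)] at h2
    exact h2.congr hAC
  have habsP : ContinuousOn (fun x => |v x| ^ p) (Set.Icc (0:ℝ) 1) := by
    have hc : ContinuousOn (fun y : ℝ => |y| ^ p) Set.univ :=
      (continuous_abs.rpow_const fun x => Or.inr hp0.le).continuousOn
    exact hc.comp hcv (Set.mapsTo_univ _ _)
  have hvint : ∀ a b : ℝ, 0 ≤ a → a ≤ b → b ≤ 1 →
      IntervalIntegrable (fun x => |v x| ^ p) volume a b := by
    intro a b ha hab hb
    apply ContinuousOn.intervalIntegrable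
    rw [Set.uIcc_of_le hab]
    exact habsP.mono (Set.Icc_subset_Icc ha hb)
  have hLph : ∀ a b : ℝ, 0 ≤ a → a ≤ b → b ≤ 1 →
      IntervalIntegrable (fun x => |v' x| ^ p) volume a b := by
    intro a b ha hab hb
    apply hLp.mono_set
    rw [Set.uIcc_of_le hab, Set.uIcc_of_le (by norm_num : (0:ℝ) ≤ 1)]
    exact Set.Icc_subset_Icc ha hb
  have splitv : (∫ x in (0:ℝ)..1, |v x| ^ p)
      = (∫ x in (0:ℝ)..(1/2), |v x| ^ p) + ∫ x in (1/2:ℝ)..1, |v x| ^ p :=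
    (intervalIntegral.integral_add_adjacent_intervals
      (hvint 0 (1/2) le_rfl (by norm_num) (by norm_num))
      (hvint (1/2) 1 (by norm_num) (by norm_num) le_rfl)).symm
  have splitv' : (∫ x in (0:ℝ)..1, |v' x| ^ p)
      = (∫ x in (0:ℝ)..(1/2), |v' x| ^ p) + ∫ x in (1/2:ℝ)..1, |v' x| ^ p :=
    (intervalIntegral.integral_add_adjacent_intervals
      (hLph 0 (1/2) le_rfl (by norm_num) (by norm_num))
      (hLph (1/2) 1 (by norm_num) (by norm_num) le_rfl)).symm
  have hconst : ((1/2:ℝ) ^ p / p) = 1 / (p * 2 ^ p) := by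
    rw [Real.div_rpow (by norm_num) (by norm_num), Real.one_rpow]
    have h2p : (0:ℝ) < (2:ℝ) ^ p := Real.rpow_pos_of_pos (by norm_num) p
    field_simp
  rw [splitv, splitv']
  calc (∫ x in (0:ℝ)..(1/2), |v x| ^ p) + ∫ x in (1/2:ℝ)..1, |v x| ^ p
      ≤ (1 / (p * 2 ^ p)) * (∫ x in (0:ℝ)..(1/2), |v' x| ^ p)
        + (1 / (p * 2 ^ p)) * ∫ x in (1/2:ℝ)..1, |v' x| ^ p := by
        rw [hconst] at half1 half2
        exact add_le_add half1 half2
    _ = (1 / (p * 2 ^ p)) * ((∫ x in (0:ℝ)..(1/2), |v' x| ^ p)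
        + ∫ x in (1/2:ℝ)..1, |v' x| ^ p) := by ring
end

section
/- Let p ∈ (1,2) and define g(y) = sgn(y)·((|y|+1)^(p-1) − 1). Then for every x ∈ ℝ, (1/2)·x·g(x) ≤ G(x) ≤ x·g(x), where G(x) = ∫₀ˣ g(s) ds = (1/p)·((|x|+1)^p − 1) − |x|. -/
noncomputable def gfun (p y : ℝ) : ℝ := Real.sign y * ((|y| + 1) ^ (p - 1) - 1)

noncomputable def Gfun (p x : ℝ) : ℝ := ((|x| + 1) ^ p - 1) / p - |x|

/-- Convex conjugate (Legendre transform) of `Gfun p`. -/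
noncomputable def Hfun (p s : ℝ) : ℝ := ⨆ y : ℝ, s * y - Gfun p y

/-!
With `t = |x| + 1` both bounds become inequalities between `t`, `t ^ (p - 1)` and `t ^ p`.
The upper bound `G(x) ≤ x g(x)` holds because `g` is nondecreasing on `[0, ∞)`; in terms of `t`
it is the weighted AM-GM inequality `p t ^ (p - 1) ≤ (p - 1) t ^ p + 1`.
The lower bound is the trapezoid rule for the concave function `g` on `[0, |x|]` (where `p ≤ 2`
enters); in terms of `t` it says that a function vanishing at `t = 1` has nonnegative derivative
on `[1, ∞)`, and that derivative is again nonnegative by weighted AM-GM.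
-/

open Real Set

section RpowInequalities

variable {p t : ℝ}

lemma self_mul_rpow_sub_one (ht : 0 < t) : t * t ^ (p - 1) = t ^ p := by
  rw [rpow_sub_one ht.ne', mul_div_cancel₀ _ ht.ne']

lemma mul_rpow_sub_one_le (hp : 1 ≤ p) (ht : 0 ≤ t) :
    p * t ^ (p - 1) ≤ (p - 1) * t ^ p + 1 := by
  have hp0 : 0 < p := by positivity
  have amgm := geom_mean_le_arith_mean2_weighted (p₁ := t ^ p) (p₂ := 1)
    (by positivity : 0 ≤ (p - 1) / p) (by positivity : 0 ≤ 1 / p) (by positivity) zero_le_one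
    (by field_simp; ring)
  rw [one_rpow, mul_one, mul_one, ← rpow_mul ht, mul_div_cancel₀ _ hp0.ne'] at amgm
  calc p * t ^ (p - 1) ≤ p * ((p - 1) / p * t ^ p + 1 / p) := by gcongr
    _ = (p - 1) * t ^ p + 1 := by field_simp

lemma one_le_weighted_rpow_sub_one_add_rpow_sub_two (hp1 : 1 ≤ p) (hp2 : p ≤ 2) (ht : 0 < t) :
    1 ≤ (2 - p) * t ^ (p - 1) + (p - 1) * t ^ (p - 2) := by
  have amgm := geom_mean_le_arith_mean2_weighted (p₁ := t ^ (p - 1)) (p₂ := t ^ (p - 2))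
    (by linarith : 0 ≤ 2 - p) (by linarith : 0 ≤ p - 1) (by positivity) (by positivity) (by ring)
  rwa [← rpow_mul ht.le, ← rpow_mul ht.le, ← rpow_add ht,
    show (p - 1) * (2 - p) + (p - 2) * (p - 1) = 0 by ring, rpow_zero] at amgm

/-- `2p` times the excess of `G(x)` over the trapezoid value `x g(x) / 2`, at `t = |x| + 1`. -/
noncomputable def trapezoidDefect (p t : ℝ) : ℝ :=
  (2 - p) * t ^ p + p * t ^ (p - 1) - p * t + (p - 2)

lemma hasDerivAt_trapezoidDefect (ht : 0 < t) :
    HasDerivAt (trapezoidDefect p)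
      (p * ((2 - p) * t ^ (p - 1) + (p - 1) * t ^ (p - 2) - 1)) t := by
  have hpow := hasDerivAt_rpow_const (p := p) (Or.inl ht.ne')
  have hpow' := hasDerivAt_rpow_const (p := p - 1) (Or.inl ht.ne')
  rw [show p - 1 - 1 = p - 2 by ring] at hpow'
  exact ((((hpow.const_mul (2 - p)).add (hpow'.const_mul p)).sub
    ((hasDerivAt_id t).const_mul p)).add_const (p - 2)).congr_deriv (by ring)

lemma trapezoidDefect_nonneg (hp1 : 1 ≤ p) (hp2 : p ≤ 2) (ht : 1 ≤ t) :
    0 ≤ trapezoidDefect p t := by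
  have hderiv : ∀ s ∈ Ici (1 : ℝ), HasDerivAt _ _ s := fun s hs =>
    hasDerivAt_trapezoidDefect (p := p) (zero_lt_one.trans_le hs)
  have hmono := monotoneOn_of_hasDerivWithinAt_nonneg (convex_Ici 1)
    (fun s hs => (hderiv s hs).continuousAt.continuousWithinAt)
    (fun s hs => (hderiv s (interior_subset hs)).hasDerivWithinAt)
    (fun s hs => by
      rw [interior_Ici] at hs
      have hamgm := one_le_weighted_rpow_sub_one_add_rpow_sub_two hp1 hp2 (zero_lt_one.trans hs)
      exact mul_nonneg (by linarith) (sub_nonneg.mpr hamgm))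
  simpa [trapezoidDefect] using hmono self_mem_Ici ht ht

end RpowInequalities

lemma Real.sign_mul_self (x : ℝ) : Real.sign x * x = |x| := by
  rcases lt_trichotomy x 0 with hx | rfl | hx
  · rw [sign_of_neg hx, abs_of_neg hx, neg_one_mul]
  · simp
  · rw [sign_of_pos hx, abs_of_pos hx, one_mul]

lemma mul_gfun_eq (p x : ℝ) : x * gfun p x = |x| * ((|x| + 1) ^ (p - 1) - 1) := by
  rw [gfun, ← mul_assoc, mul_comm x, Real.sign_mul_self]

lemma Gfun_le_mul_gfun {p : ℝ} (hp : 1 ≤ p) (x : ℝ) : Gfun p x ≤ x * gfun p x := by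
  have hp0 : 0 < p := by linarith
  have ht : 0 < |x| + 1 := by positivity
  have hpow := self_mul_rpow_sub_one (p := p) ht
  have amgm := mul_rpow_sub_one_le hp ht.le
  rw [Gfun, mul_gfun_eq, div_sub' hp0.ne', div_le_iff₀ hp0]
  nlinarith

lemma half_mul_gfun_le_Gfun {p : ℝ} (hp1 : 1 ≤ p) (hp2 : p ≤ 2) (x : ℝ) :
    1 / 2 * (x * gfun p x) ≤ Gfun p x := by
  have hp0 : 0 < p := by linarith
  have ht : 0 < |x| + 1 := by positivity
  have hpow := self_mul_rpow_sub_one (p := p) ht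
  have defect := trapezoidDefect_nonneg hp1 hp2 (le_add_of_nonneg_left (abs_nonneg x))
  rw [trapezoidDefect] at defect
  rw [Gfun, mul_gfun_eq, div_sub' hp0.ne', le_div_iff₀ hp0]
  nlinarith

theorem xg_between_G (p : ℝ) (hp1 : 1 < p) (hp2 : p < 2) (x : ℝ) :
    (1 / 2) * (x * gfun p x) ≤ Gfun p x ∧ Gfun p x ≤ x * gfun p x :=
  ⟨half_mul_gfun_le_Gfun hp1.le hp2.le x, Gfun_le_mul_gfun hp1.le x⟩
end

section
/- Let p ∈ (1,2), g(y) = sgn(y)·((|y|+1)^(p-1) − 1), and G(x) = ((|x|+1)^p − 1)/p − |x|. For every M > 0 and every real x with |x| > M, one has ((1 + 1/M)^(p−1) − (1/M)^(p−1))·|x|^p ≤ x·g(x) ≤ |x|^p and (1/2)·((1 + 1/M)^(p−1) − (1/M)^(p−1))·|x|^p ≤ G(x) ≤ |x|^p. -/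
private lemma monoIci {f f' : ℝ → ℝ} (hd : ∀ u, 1 ≤ u → HasDerivAt f (f' u) u)
    (h0 : ∀ u, 1 < u → 0 ≤ f' u) : MonotoneOn f (Set.Ici 1) := by
  apply monotoneOn_of_deriv_nonneg (convex_Ici 1)
  · exact fun u hu => (hd u hu).continuousAt.continuousWithinAt
  · rw [interior_Ici]
    exact fun u hu => ((hd u (le_of_lt hu)).differentiableAt).differentiableWithinAt
  · rw [interior_Ici]
    intro u hu
    rw [(hd u hu.le).deriv]
    exact h0 u hu

private lemma antiIci {f f' : ℝ → ℝ} (hd : ∀ u, 1 ≤ u → HasDerivAt f (f' u) u)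
    (h0 : ∀ u, 1 < u → f' u ≤ 0) : AntitoneOn f (Set.Ici 1) := by
  apply antitoneOn_of_deriv_nonpos (convex_Ici 1)
  · exact fun u hu => (hd u hu).continuousAt.continuousWithinAt
  · rw [interior_Ici]
    exact fun u hu => ((hd u (le_of_lt hu)).differentiableAt).differentiableWithinAt
  · rw [interior_Ici]
    intro u hu
    rw [(hd u hu.le).deriv]
    exact h0 u hu

private lemma chi_nonneg {p : ℝ} (hp1 : 1 < p) (hp2 : p < 2) {u : ℝ} (hu : 1 ≤ u) :
    0 ≤ (p - 1) * u ^ p - p * u ^ (p - 1) + 1 := by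
  have hmono : MonotoneOn (fun u : ℝ => (p - 1) * u ^ p - p * u ^ (p - 1) + 1) (Set.Ici 1) := by
    apply monoIci (f' := fun u => (p - 1) * (p * u ^ (p - 1)) - p * ((p - 1) * u ^ (p - 1 - 1)))
    · intro u hu
      have hne : u ≠ 0 := by positivity
      exact (((Real.hasDerivAt_rpow_const (Or.inl hne)).const_mul (p - 1)).sub
        ((Real.hasDerivAt_rpow_const (p := p - 1) (Or.inl hne)).const_mul p)).add_const 1
    · intro u hu
      have h1 : u ^ (p - 1 - 1) ≤ u ^ (p - 1) :=
        Real.rpow_le_rpow_of_exponent_le hu.le (by linarith)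
      have h2 : (0:ℝ) ≤ p * (p - 1) := by nlinarith
      nlinarith [mul_nonneg h2 (sub_nonneg.2 h1)]
  have := hmono (Set.self_mem_Ici) (Set.mem_Ici.2 hu) hu
  simp only [Real.one_rpow] at this
  linarith

private lemma psi_nonneg {p : ℝ} (hp1 : 1 < p) (hp2 : p < 2) {u : ℝ} (hu : 1 ≤ u) :
    0 ≤ (2 - p) * u ^ p + p * u ^ (p - 1) - p * u + (p - 2) := by
  have hmono : MonotoneOn (fun u : ℝ => (2 - p) * u ^ p + p * u ^ (p - 1) - p * u + (p - 2))
      (Set.Ici 1) := by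
    apply monoIci (f' := fun u =>
      (2 - p) * (p * u ^ (p - 1)) + p * ((p - 1) * u ^ (p - 1 - 1)) - p * 1)
    · intro u hu
      have hne : u ≠ 0 := by positivity
      exact ((((Real.hasDerivAt_rpow_const (Or.inl hne)).const_mul (2 - p)).add
        ((Real.hasDerivAt_rpow_const (p := p - 1) (Or.inl hne)).const_mul p)).sub
        ((hasDerivAt_id u).const_mul p)).add_const (p - 2)
    · intro u hu
      have hu0 : (0:ℝ) < u := by linarith
      have ham := Real.geom_mean_le_arith_mean2_weighted (w₁ := 2 - p) (w₂ := p - 1)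
        (p₁ := u ^ (p - 1)) (p₂ := u ^ (p - 1 - 1)) (by linarith) (by linarith)
        (Real.rpow_nonneg hu0.le _) (Real.rpow_nonneg hu0.le _) (by ring)
      rw [← Real.rpow_mul hu0.le, ← Real.rpow_mul hu0.le, ← Real.rpow_add hu0,
        show (p - 1) * (2 - p) + (p - 1 - 1) * (p - 1) = 0 by ring, Real.rpow_zero] at ham
      nlinarith [mul_le_mul_of_nonneg_left ham (by linarith : (0:ℝ) ≤ p)]
  have := hmono (Set.self_mem_Ici) (Set.mem_Ici.2 hu) hu
  simp only [Real.one_rpow] at this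
  linarith

private lemma shift_anti {p t : ℝ} (hp1 : 1 < p) (hp2 : p < 2) (ht : 0 < t) {b : ℝ}
    (hb : 1 ≤ b) : (t + b) ^ (p - 1) - b ^ (p - 1) ≤ (t + 1) ^ (p - 1) - 1 := by
  have hanti : AntitoneOn (fun s : ℝ => (t + s) ^ (p - 1) - s ^ (p - 1)) (Set.Ici 1) := by
    apply antiIci (f' := fun s => (p - 1) * (t + s) ^ (p - 1 - 1) * 1 - (p - 1) * s ^ (p - 1 - 1))
    · intro s hs
      have hs0 : (0:ℝ) < s := by linarith
      have hts : t + s ≠ 0 := by positivity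
      have h1 : HasDerivAt (fun s : ℝ => (t + s) ^ (p - 1))
          ((p - 1) * (t + s) ^ (p - 1 - 1) * 1) s :=
        (Real.hasDerivAt_rpow_const (p := p - 1) (Or.inl hts)).comp s
          ((hasDerivAt_id s).const_add t)
      exact h1.sub (Real.hasDerivAt_rpow_const (p := p - 1) (Or.inl (by positivity)))
    · intro s hs
      have hs0 : (0:ℝ) < s := by linarith
      have hle : (t + s) ^ (p - 1 - 1) ≤ s ^ (p - 1 - 1) :=
        Real.rpow_le_rpow_of_nonpos hs0 (by linarith) (by linarith)
      nlinarith [mul_le_mul_of_nonneg_left hle (by linarith : (0:ℝ) ≤ p - 1)]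
  have := hanti (Set.self_mem_Ici) (Set.mem_Ici.2 hb) hb
  simpa [Real.one_rpow] using this

private lemma subadd {q t : ℝ} (hq0 : 0 ≤ q) (hq1 : q ≤ 1) (ht : 0 ≤ t) :
    (t + 1) ^ q ≤ t ^ q + 1 := by
  have h := NNReal.rpow_add_le_add_rpow (Real.toNNReal t) 1 hq0 hq1
  have h2 := NNReal.coe_le_coe.2 h
  push_cast at h2
  rw [Real.coe_toNNReal t ht] at h2
  simpa using h2

theorem power_bounds_large (p : ℝ) (hp1 : 1 < p) (hp2 : p < 2)
    (M : ℝ) (hM : 0 < M) (x : ℝ) (hx : M < |x|) :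
    ((1 + 1 / M) ^ (p - 1) - (1 / M) ^ (p - 1)) * |x| ^ p ≤ x * gfun p x ∧
    x * gfun p x ≤ |x| ^ p ∧
    (1 / 2) * ((1 + 1 / M) ^ (p - 1) - (1 / M) ^ (p - 1)) * |x| ^ p ≤ Gfun p x ∧
    Gfun p x ≤ |x| ^ p := by
  have hp0 : (0:ℝ) < p := by linarith
  have ht : (0:ℝ) < |x| := lt_trans hM hx
  set t := |x| with htdef
  -- x * gfun p x = t * ((t+1)^(p-1) - 1)
  have hsign : x * Real.sign x = t := by
    rcases lt_trichotomy x 0 with h | h | h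
    · rw [Real.sign_of_neg h, htdef, abs_of_neg h]; ring
    · exfalso; rw [htdef, h, abs_zero] at ht; exact lt_irrefl 0 ht
    · rw [Real.sign_of_pos h, htdef, abs_of_pos h]; ring
  have hxg : x * gfun p x = t * ((t + 1) ^ (p - 1) - 1) := by
    show x * (Real.sign x * ((|x| + 1) ^ (p - 1) - 1)) = _
    rw [← htdef, ← hsign]; ring
  -- t^p = t * t^(p-1)
  have htp : t ^ p = t * t ^ (p - 1) := by
    nth_rewrite 1 [show p = 1 + (p - 1) by ring]
    rw [Real.rpow_add ht, Real.rpow_one]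
  -- key1 : lower bound for t * ((t+1)^(p-1) - 1)
  have hb : (1:ℝ) ≤ t / M := (one_le_div hM).2 hx.le
  have hB := shift_anti hp1 hp2 ht hb
  have hM' : (0:ℝ) ≤ 1 + 1 / M := by positivity
  have heq1 : (1 + 1 / M) ^ (p - 1) * t ^ (p - 1) = (t + t / M) ^ (p - 1) := by
    rw [← Real.mul_rpow hM' ht.le]
    congr 1
    field_simp
  have heq2 : (1 / M) ^ (p - 1) * t ^ (p - 1) = (t / M) ^ (p - 1) := by
    rw [← Real.mul_rpow (by positivity) ht.le]
    congr 1
    field_simp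
  have key1 : ((1 + 1 / M) ^ (p - 1) - (1 / M) ^ (p - 1)) * t ^ p ≤
      t * ((t + 1) ^ (p - 1) - 1) := by
    have : ((1 + 1 / M) ^ (p - 1) - (1 / M) ^ (p - 1)) * t ^ p =
        t * ((t + t / M) ^ (p - 1) - (t / M) ^ (p - 1)) := by
      rw [htp, ← heq1, ← heq2]; ring
    rw [this]
    exact mul_le_mul_of_nonneg_left hB ht.le
  -- key2 : upper bound
  have hA := subadd (q := p - 1) (by linarith) (by linarith) ht.le
  have key2 : t * ((t + 1) ^ (p - 1) - 1) ≤ t ^ p := by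
    rw [htp]
    exact mul_le_mul_of_nonneg_left (by linarith) ht.le
  -- G bounds via chi and psi at u = t + 1
  have hu : (1:ℝ) ≤ t + 1 := by linarith
  have hu0 : (0:ℝ) < t + 1 := by linarith
  have hApe : p * (t + 1) ^ p = p * ((t + 1) * (t + 1) ^ (p - 1)) := by
    congr 1
    nth_rewrite 1 [show p = 1 + (p - 1) by ring]
    rw [Real.rpow_add hu0, Real.rpow_one]
  have hchi := chi_nonneg hp1 hp2 hu
  have hpsi := psi_nonneg hp1 hp2 hu
  have hGdef : Gfun p x = ((t + 1) ^ p - 1) / p - t := rfl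
  have key3 : Gfun p x ≤ t * ((t + 1) ^ (p - 1) - 1) := by
    rw [hGdef, sub_le_iff_le_add, div_le_iff₀ hp0]
    nlinarith [hchi, hApe]
  have key4 : t * ((t + 1) ^ (p - 1) - 1) ≤ 2 * Gfun p x := by
    rw [hGdef]
    have h2 : 2 * (((t + 1) ^ p - 1) / p - t) = (2 * ((t + 1) ^ p - 1) - 2 * p * t) / p := by
      field_simp
    rw [h2, le_div_iff₀ hp0]
    nlinarith [hpsi, hApe]
  refine ⟨by rw [hxg]; exact key1, by rw [hxg]; exact key2, by linarith, by linarith⟩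
end

section
/- Let p ∈ (1,2), g(y) = sgn(y)·((|y|+1)^(p-1) − 1), G(x) = ((|x|+1)^p − 1)/p − |x|, and H the convex conjugate of G. Let M > 0 satisfy (1 + 1/M)^p < p. Then for every real x with |x| > M, (1 − (1/p)(1 + 1/M)^p)·|x|^p ≤ H(g(x)) ≤ (1 + 1/M)^(p−1)·|x|^p. -/
lemma key_grad (p : ℝ) (hp1 : 1 < p) (u v : ℝ) (hu : 0 ≤ u) (hv : 0 ≤ v) :
    ((v+1)^(p-1) - 1) * (u - v) ≤ (((u+1)^p - 1)/p - u) - (((v+1)^p - 1)/p - v) := by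
  set F : ℝ → ℝ := fun t => ((t+1)^p - 1)/p - t with hFdef
  have hder : ∀ t : ℝ, HasDerivAt F ((t+1)^(p-1) - 1) t := by
    intro t
    have h1 : HasDerivAt (fun t : ℝ => t + 1) 1 t := (hasDerivAt_id t).add_const 1
    have h2 : HasDerivAt (fun t : ℝ => (t+1)^p) (p * (t+1)^(p-1)) t := by
      have := (Real.hasDerivAt_rpow_const (p := p) (x := t+1) (Or.inr hp1.le)).comp t h1
      simpa [Function.comp_def] using this
    have h3 := ((h2.sub_const 1).div_const p).sub (hasDerivAt_id t)
    have hp0 : p ≠ 0 := by linarith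
    rw [mul_div_cancel_left₀ _ hp0] at h3
    exact h3
  have mono : ∀ a b : ℝ, 0 ≤ a → a ≤ b → (a+1)^(p-1) ≤ (b+1)^(p-1) := by
    intro a b ha hab
    exact Real.rpow_le_rpow (by linarith) (by linarith) (by linarith)
  rcases lt_trichotomy u v with h | h | h
  · obtain ⟨c, hc, heq⟩ := exists_hasDerivAt_eq_slope F (fun t => (t+1)^(p-1) - 1) h
      (fun t _ => (hder t).continuousAt.continuousWithinAt) (fun t _ => hder t)
    have hFd : F v - F u = ((c+1)^(p-1) - 1) * (v - u) := by
      have hne : v - u ≠ (0:ℝ) := (sub_pos.mpr h).ne'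
      exact (div_eq_iff hne).mp heq.symm
    have hmc : (c+1)^(p-1) ≤ (v+1)^(p-1) := mono c v (by linarith [hc.1]) hc.2.le
    have hFu : F u = ((u+1)^p - 1)/p - u := rfl
    have hFv : F v = ((v+1)^p - 1)/p - v := rfl
    rw [hFu, hFv] at hFd
    nlinarith
  · subst h; simp
  · obtain ⟨c, hc, heq⟩ := exists_hasDerivAt_eq_slope F (fun t => (t+1)^(p-1) - 1) h
      (fun t _ => (hder t).continuousAt.continuousWithinAt) (fun t _ => hder t)
    have hFd : F u - F v = ((c+1)^(p-1) - 1) * (u - v) := by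
      have hne : u - v ≠ (0:ℝ) := (sub_pos.mpr h).ne'
      exact (div_eq_iff hne).mp heq.symm
    have hmc : (v+1)^(p-1) ≤ (c+1)^(p-1) := mono v c hv hc.1.le
    have hFu : F u = ((u+1)^p - 1)/p - u := rfl
    have hFv : F v = ((v+1)^p - 1)/p - v := rfl
    rw [hFu, hFv] at hFd
    nlinarith

theorem conjugate_power_bounds_large (p : ℝ) (hp1 : 1 < p) (hp2 : p < 2)
    (M : ℝ) (hM : 0 < M) (hMp : (1 + 1 / M) ^ p < p)
    (x : ℝ) (hx : M < |x|) :
    (1 - (1 / p) * (1 + 1 / M) ^ p) * |x| ^ p ≤ Hfun p (gfun p x) ∧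
    Hfun p (gfun p x) ≤ (1 + 1 / M) ^ (p - 1) * |x| ^ p := by
  have hp0 : (0:ℝ) < p := by linarith
  have hXpos : 0 < |x| := lt_trans hM hx
  have hx0 : x ≠ 0 := by intro h; rw [h] at hXpos; simp at hXpos
  set X : ℝ := |x| with hXdef
  set A : ℝ := X + 1 with hAdef
  set B : ℝ := 1 + 1 / M with hBdef
  have hApos : (0:ℝ) < A := by positivity
  have hA1 : (1:ℝ) ≤ A := by simp [hAdef]; positivity
  have hBpos : (0:ℝ) < B := by positivity
  have hAp1 : (1:ℝ) ≤ A ^ (p-1) := by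
    calc (1:ℝ) = 1 ^ (p-1) := (Real.one_rpow _).symm
    _ ≤ A ^ (p-1) := Real.rpow_le_rpow zero_le_one hA1 (by linarith)
  have hABX : A ≤ B * X := by
    rw [hAdef, hBdef]
    have h1 : (1:ℝ) ≤ X / M := (one_le_div hM).mpr hx.le
    have h2 : (1 + 1/M) * X = X + X / M := by field_simp
    linarith
  set val : ℝ := X * A ^ (p-1) - (A ^ p - 1)/p with hvaldef
  -- pointwise upper bound
  have hub : ∀ y : ℝ, gfun p x * y - Gfun p y ≤ val := by
    intro y
    have habs : |gfun p x| = A ^ (p-1) - 1 := by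
      rw [gfun, abs_mul, abs_of_nonneg (by linarith : (0:ℝ) ≤ (|x|+1) ^ (p-1) - 1)]
      rcases hx0.lt_or_gt with h | h
      · simp [Real.sign_of_neg h, hAdef, hXdef]
      · simp [Real.sign_of_pos h, hAdef, hXdef]
    have h1 : gfun p x * y ≤ (A ^ (p-1) - 1) * |y| := by
      calc gfun p x * y ≤ |gfun p x * y| := le_abs_self _
      _ = (A ^ (p-1) - 1) * |y| := by rw [abs_mul, habs]
    have h2 := key_grad p hp1 |y| X (abs_nonneg y) hXpos.le
    simp only [Gfun, hvaldef]
    nlinarith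
  -- value attained at y = x
  have hxval : gfun p x * x - Gfun p x = val := by
    have hsx : Real.sign x * x = X := by
      rcases hx0.lt_or_gt with h | h
      · rw [Real.sign_of_neg h]; simp [hXdef, abs_of_neg h]
      · rw [Real.sign_of_pos h]; simp [hXdef, abs_of_pos h]
    simp only [gfun, Gfun, hvaldef]
    have : Real.sign x * ((|x| + 1) ^ (p - 1) - 1) * x
        = (Real.sign x * x) * ((|x| + 1) ^ (p - 1) - 1) := by ring
    rw [this, hsx]
    ring
  have hsup : Hfun p (gfun p x) = val := by
    apply le_antisymm (ciSup_le hub)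
    calc val = gfun p x * x - Gfun p x := hxval.symm
    _ ≤ Hfun p (gfun p x) := le_ciSup ⟨val, by rintro _ ⟨y, rfl⟩; exact hub y⟩ x
  rw [hsup]
  have hXp : X ^ p = X * X ^ (p-1) := by
    rw [show p = 1 + (p-1) by ring, Real.rpow_add hXpos, Real.rpow_one]
    ring_nf
  have hBXp1 : A ^ (p-1) ≤ B ^ (p-1) * X ^ (p-1) := by
    rw [← Real.mul_rpow hBpos.le hXpos.le]
    exact Real.rpow_le_rpow hApos.le hABX (by linarith)
  have hBXp : A ^ p ≤ B ^ p * X ^ p := by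
    rw [← Real.mul_rpow hBpos.le hXpos.le]
    exact Real.rpow_le_rpow hApos.le hABX hp0.le
  have hAXp1 : X ^ (p-1) ≤ A ^ (p-1) :=
    Real.rpow_le_rpow hXpos.le (by simp [hAdef]) (by linarith)
  have hAp : (1:ℝ) ≤ A ^ p := by
    calc (1:ℝ) = 1 ^ p := (Real.one_rpow _).symm
    _ ≤ A ^ p := Real.rpow_le_rpow zero_le_one hA1 hp0.le
  constructor
  · -- lower bound
    have h1 : X * X ^ (p-1) ≤ X * A ^ (p-1) := by nlinarith
    have h2 : (A ^ p - 1)/p ≤ B ^ p * X ^ p / p := by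
      gcongr
      linarith
    simp only [hvaldef]
    rw [← hXp] at h1
    have : B ^ p * X ^ p / p = 1/p * B ^ p * X ^ p := by ring
    rw [this] at h2
    linarith
  · -- upper bound
    have h1 : X * A ^ (p-1) ≤ X * (B ^ (p-1) * X ^ (p-1)) := by nlinarith
    simp only [hvaldef]
    have h2 : (0:ℝ) ≤ (A ^ p - 1)/p := div_nonneg (by linarith) hp0.le
    calc X * A ^ (p-1) - (A ^ p - 1)/p ≤ X * (B ^ (p-1) * X ^ (p-1)) := by linarith
    _ = B ^ (p-1) * X ^ p := by rw [hXp]; ring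
end

section
/- Let p ∈ (1,2), g(y) = sgn(y)·((|y|+1)^(p-1) − 1), G(x) = ((|x|+1)^p − 1)/p − |x|, and H the convex conjugate of G. There exist positive constants c_p, C_p depending only on p such that for all x ∈ ℝ: c_p·x·g(x) ≤ H(g(x)) ≤ C_p·x·g(x) and c_p·G(x) ≤ H(g(x)) ≤ C_p·G(x). -/
section aux

variable {p : ℝ}

private lemma hasDerivAt_G0 (hp1 : 1 < p) {t : ℝ} (ht : -1 < t) :
    HasDerivAt (fun t : ℝ => ((t + 1) ^ p - 1) / p - t) ((t + 1) ^ (p - 1) - 1) t := by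
  have hne : t + 1 ≠ 0 := ne_of_gt (by linarith)
  have h1 : HasDerivAt (fun t : ℝ => t + 1) 1 t := (hasDerivAt_id t).add_const 1
  have h2 := ((h1.rpow_const (p := p) (Or.inl hne)).sub_const 1).div_const p
  have h3 := h2.sub (hasDerivAt_id t)
  refine h3.congr_deriv ?_
  have hp0 : p ≠ 0 := by positivity
  field_simp

private lemma hasDerivAt_g0 (hp1 : 1 < p) {t : ℝ} (ht : -1 < t) :
    HasDerivAt (fun t : ℝ => (t + 1) ^ (p - 1) - 1) ((p - 1) * (t + 1) ^ (p - 2)) t := by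
  have hne : t + 1 ≠ 0 := ne_of_gt (by linarith)
  have h1 : HasDerivAt (fun t : ℝ => t + 1) 1 t := (hasDerivAt_id t).add_const 1
  have h2 := (h1.rpow_const (p := p - 1) (Or.inl hne)).sub_const 1
  refine h2.congr_deriv ?_
  rw [show p - 1 - 1 = p - 2 by ring]
  ring

private lemma mono_Ici {f f' : ℝ → ℝ} {a : ℝ}
    (hd : ∀ t ∈ Set.Ici a, HasDerivAt f (f' t) t)
    (h0 : ∀ t ∈ Set.Ioi a, 0 ≤ f' t) : MonotoneOn f (Set.Ici a) := by
  apply monotoneOn_of_deriv_nonneg (convex_Ici a)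
  · exact fun t ht => (hd t ht).continuousAt.continuousWithinAt
  · rw [interior_Ici]
    exact fun t ht => (hd t (Set.Ioi_subset_Ici_self ht)).differentiableAt.differentiableWithinAt
  · rw [interior_Ici]
    intro t ht
    rw [(hd t (Set.Ioi_subset_Ici_self ht)).deriv]
    exact h0 t ht

private lemma anti_Icc {f f' : ℝ → ℝ} {a b : ℝ}
    (hd : ∀ t ∈ Set.Icc a b, HasDerivAt f (f' t) t)
    (h0 : ∀ t ∈ Set.Ioo a b, f' t ≤ 0) : AntitoneOn f (Set.Icc a b) := by
  apply antitoneOn_of_deriv_nonpos (convex_Icc a b)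
  · exact fun t ht => (hd t ht).continuousAt.continuousWithinAt
  · rw [interior_Icc]
    exact fun t ht => (hd t ⟨le_of_lt ht.1, le_of_lt ht.2⟩).differentiableAt.differentiableWithinAt
  · rw [interior_Icc]
    intro t ht
    rw [(hd t ⟨le_of_lt ht.1, le_of_lt ht.2⟩).deriv]
    exact h0 t ht

/-- Gradient inequality for `G0` on `[0,∞)`. -/
private lemma grad_ineq (hp1 : 1 < p) {s t : ℝ} (hs : 0 ≤ s) (ht : 0 ≤ t) :
    ((s + 1) ^ (p - 1) - 1) * (t - s) ≤
      (((t + 1) ^ p - 1) / p - t) - (((s + 1) ^ p - 1) / p - s) := by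
  set c : ℝ := (s + 1) ^ (p - 1) - 1 with hc
  have hd : ∀ y : ℝ, 0 ≤ y →
      HasDerivAt (fun y : ℝ => (((y + 1) ^ p - 1) / p - y) - c * y)
        ((y + 1) ^ (p - 1) - 1 - c) y := by
    intro y hy
    have h1 := (hasDerivAt_G0 hp1 (by linarith : (-1:ℝ) < y)).sub
      ((hasDerivAt_id y).const_mul c)
    refine h1.congr_deriv ?_
    ring
  have hmono : ∀ a b : ℝ, 0 ≤ a → a ≤ b → (a + 1) ^ (p - 1) ≤ (b + 1) ^ (p - 1) := by
    intro a b ha hab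
    exact Real.rpow_le_rpow (by linarith) (by linarith) (by linarith)
  rcases le_total s t with hst | hst
  · have hm : MonotoneOn (fun y : ℝ => (((y + 1) ^ p - 1) / p - y) - c * y) (Set.Ici s) := by
      apply mono_Ici (f' := fun y => (y + 1) ^ (p - 1) - 1 - c)
      · exact fun y hy => hd y (le_trans hs hy)
      · intro y hy
        have := hmono s y hs (le_of_lt hy)
        simp only [hc]; linarith
    have h2 := hm (Set.self_mem_Ici) (show t ∈ Set.Ici s from hst) hst
    simp only at h2
    linarith
  · have hm : AntitoneOn (fun y : ℝ => (((y + 1) ^ p - 1) / p - y) - c * y) (Set.Icc t s) := by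
      apply anti_Icc (f' := fun y => (y + 1) ^ (p - 1) - 1 - c)
      · exact fun y hy => hd y (le_trans ht hy.1)
      · intro y hy
        have := hmono y s (le_trans ht (le_of_lt hy.1)) (le_of_lt hy.2)
        simp only [hc]; linarith
    have h2 := hm (show t ∈ Set.Icc t s from ⟨le_refl t, hst⟩)
      (show s ∈ Set.Icc t s from ⟨hst, le_refl s⟩) hst
    simp only at h2
    linarith

private lemma g0_nonneg (hp1 : 1 < p) {t : ℝ} (ht : 0 ≤ t) :
    0 ≤ (t + 1) ^ (p - 1) - 1 := by
  have h : (1:ℝ) ^ (p - 1) ≤ (t + 1) ^ (p - 1) :=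
    Real.rpow_le_rpow zero_le_one (by linarith) (by linarith)
  rw [Real.one_rpow] at h
  linarith

private lemma G0_nonneg (hp1 : 1 < p) {t : ℝ} (ht : 0 ≤ t) :
    0 ≤ ((t + 1) ^ p - 1) / p - t := by
  have h := grad_ineq hp1 (le_refl (0:ℝ)) ht
  simp only [zero_add, Real.one_rpow] at h
  have hp0 : (0:ℝ) < p := by linarith
  have h0 : ((1:ℝ) - 1) / p - 0 = 0 := by field_simp; ring
  linarith

/-- `p * G0 t ≤ t * g0 t` for `t ≥ 0`. -/
private lemma lemC (hp1 : 1 < p) (hp2 : p < 2) {t : ℝ} (ht : 0 ≤ t) :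
    p * (((t + 1) ^ p - 1) / p - t) ≤ t * ((t + 1) ^ (p - 1) - 1) := by
  have hd : ∀ y : ℝ, 0 ≤ y →
      HasDerivAt (fun y : ℝ => y * ((y + 1) ^ (p - 1) - 1) - p * (((y + 1) ^ p - 1) / p - y))
        (1 * ((y + 1) ^ (p - 1) - 1) + y * ((p - 1) * (y + 1) ^ (p - 2))
          - p * ((y + 1) ^ (p - 1) - 1)) y := by
    intro y hy
    exact ((hasDerivAt_id y).mul (hasDerivAt_g0 hp1 (by linarith))).sub
      ((hasDerivAt_G0 hp1 (by linarith)).const_mul p)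
  have hm : MonotoneOn
      (fun y : ℝ => y * ((y + 1) ^ (p - 1) - 1) - p * (((y + 1) ^ p - 1) / p - y))
      (Set.Ici (0:ℝ)) := by
    apply mono_Ici (f' := fun y => 1 * ((y + 1) ^ (p - 1) - 1) + y * ((p - 1) * (y + 1) ^ (p - 2))
          - p * ((y + 1) ^ (p - 1) - 1))
    · exact fun y hy => hd y hy
    · intro y hy
      have hy0 : (0:ℝ) < y := hy
      have hne : y + 1 ≠ 0 := by positivity
      have hA1 : (y + 1) ^ (p - 1) = (y + 1) ^ (p - 2) * (y + 1) := by
        rw [show p - 1 = p - 2 + 1 by ring, Real.rpow_add_one hne]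
      have hA2 : (y + 1) ^ (p - 2) ≤ 1 :=
        Real.rpow_le_one_of_one_le_of_nonpos (by linarith) (by linarith)
      nlinarith [hA1, hA2, hy0.le]
  have h2 := hm (Set.self_mem_Ici) (show t ∈ Set.Ici (0:ℝ) from ht) ht
  simp only [zero_add, Real.one_rpow, zero_mul] at h2
  have hp0 : (0:ℝ) < p := by linarith
  have h0 : ((1:ℝ) - 1) / p - 0 = 0 := by field_simp; ring
  rw [h0] at h2
  linarith

/-- `t * g0 t ≤ 2 * G0 t` for `t ≥ 0`. -/
private lemma lemD (hp1 : 1 < p) (hp2 : p < 2) {t : ℝ} (ht : 0 ≤ t) :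
    t * ((t + 1) ^ (p - 1) - 1) ≤ 2 * (((t + 1) ^ p - 1) / p - t) := by
  have hd : ∀ y : ℝ, 0 ≤ y →
      HasDerivAt (fun y : ℝ => 2 * (((y + 1) ^ p - 1) / p - y) - y * ((y + 1) ^ (p - 1) - 1))
        (2 * ((y + 1) ^ (p - 1) - 1)
          - (1 * ((y + 1) ^ (p - 1) - 1) + y * ((p - 1) * (y + 1) ^ (p - 2)))) y := by
    intro y hy
    exact ((hasDerivAt_G0 hp1 (by linarith)).const_mul 2).sub
      ((hasDerivAt_id y).mul (hasDerivAt_g0 hp1 (by linarith)))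
  have hm : MonotoneOn
      (fun y : ℝ => 2 * (((y + 1) ^ p - 1) / p - y) - y * ((y + 1) ^ (p - 1) - 1))
      (Set.Ici (0:ℝ)) := by
    apply mono_Ici (f' := fun y => 2 * ((y + 1) ^ (p - 1) - 1)
          - (1 * ((y + 1) ^ (p - 1) - 1) + y * ((p - 1) * (y + 1) ^ (p - 2))))
    · exact fun y hy => hd y hy
    · intro y hy
      have hy0 : (0:ℝ) < y := hy
      have hyne : (0:ℝ) < y + 1 := by linarith
      have hne : y + 1 ≠ 0 := ne_of_gt hyne
      have hA1 : (y + 1) ^ (p - 1) = (y + 1) ^ (p - 2) * (y + 1) := by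
        rw [show p - 1 = p - 2 + 1 by ring, Real.rpow_add_one hne]
      -- AM-GM: 1 = X^(2-p) * Y^(p-1) ≤ (2-p) X + (p-1) Y with X = (y+1)^(p-1), Y = (y+1)^(p-2)
      have hX : (0:ℝ) ≤ (y + 1) ^ (p - 1) := Real.rpow_nonneg hyne.le _
      have hY : (0:ℝ) ≤ (y + 1) ^ (p - 2) := Real.rpow_nonneg hyne.le _
      have hamgm := Real.geom_mean_le_arith_mean2_weighted
        (by linarith : (0:ℝ) ≤ 2 - p) (by linarith : (0:ℝ) ≤ p - 1) hX hY (by ring)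
      have hprod : ((y + 1) ^ (p - 1)) ^ (2 - p) * ((y + 1) ^ (p - 2)) ^ (p - 1) = 1 := by
        rw [← Real.rpow_mul hyne.le, ← Real.rpow_mul hyne.le, ← Real.rpow_add hyne,
          show (p - 1) * (2 - p) + (p - 2) * (p - 1) = 0 by ring, Real.rpow_zero]
      rw [hprod] at hamgm
      nlinarith [hA1, hamgm, hy0.le]
  have h2 := hm (Set.self_mem_Ici) (show t ∈ Set.Ici (0:ℝ) from ht) ht
  simp only [zero_add, Real.one_rpow, zero_mul] at h2
  have hp0 : (0:ℝ) < p := by linarith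
  have h0 : ((1:ℝ) - 1) / p - 0 = 0 := by field_simp; ring
  rw [h0] at h2
  linarith

end aux

theorem Hg_comparable (p : ℝ) (hp1 : 1 < p) (hp2 : p < 2) :
    ∃ c C : ℝ, 0 < c ∧ 0 < C ∧ ∀ x : ℝ,
      c * (x * gfun p x) ≤ Hfun p (gfun p x) ∧
      Hfun p (gfun p x) ≤ C * (x * gfun p x) ∧
      c * Gfun p x ≤ Hfun p (gfun p x) ∧
      Hfun p (gfun p x) ≤ C * Gfun p x := by
  have hp0 : (0:ℝ) < p := by linarith
  refine ⟨(p - 1) / p, 2, div_pos (by linarith) hp0, by norm_num, fun x => ?_⟩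
  -- rewrite x * gfun p x
  have hA : x * gfun p x = |x| * ((|x| + 1) ^ (p - 1) - 1) := by
    unfold gfun
    rcases lt_trichotomy x 0 with h | h | h
    · rw [Real.sign_of_neg h, abs_of_neg h]; ring
    · simp [h]
    · rw [Real.sign_of_pos h, abs_of_pos h]; ring
  -- sup is attained at y = x
  have hub : ∀ y : ℝ, gfun p x * y - Gfun p y ≤ x * gfun p x - Gfun p x := by
    intro y
    have hg0 : 0 ≤ (|x| + 1) ^ (p - 1) - 1 := g0_nonneg hp1 (abs_nonneg x)
    have hs : Real.sign x * y ≤ |y| := by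
      rcases lt_trichotomy x 0 with h | h | h
      · rw [Real.sign_of_neg h]; simpa using neg_le_abs y
      · simp [h, abs_nonneg]
      · rw [Real.sign_of_pos h]; simpa using le_abs_self y
    have h1 : gfun p x * y ≤ ((|x| + 1) ^ (p - 1) - 1) * |y| := by
      unfold gfun
      calc Real.sign x * ((|x| + 1) ^ (p - 1) - 1) * y
          = ((|x| + 1) ^ (p - 1) - 1) * (Real.sign x * y) := by ring
        _ ≤ ((|x| + 1) ^ (p - 1) - 1) * |y| := mul_le_mul_of_nonneg_left hs hg0
    have h3 := grad_ineq hp1 (abs_nonneg x) (abs_nonneg y)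
    simp only [Gfun]
    rw [hA]
    nlinarith [h1, h3]
  have hbdd : BddAbove (Set.range fun y : ℝ => gfun p x * y - Gfun p y) := by
    refine ⟨x * gfun p x - Gfun p x, ?_⟩
    rintro _ ⟨y, rfl⟩
    exact hub y
  have hkey : Hfun p (gfun p x) = x * gfun p x - Gfun p x := by
    unfold Hfun
    refine le_antisymm (ciSup_le hub) ?_
    have h := le_ciSup hbdd x
    calc x * gfun p x - Gfun p x = gfun p x * x - Gfun p x := by ring
      _ ≤ _ := h
  -- the comparison facts
  have hC := lemC hp1 hp2 (abs_nonneg x)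
  have hD := lemD hp1 hp2 (abs_nonneg x)
  have hB0 : 0 ≤ ((|x| + 1) ^ p - 1) / p - |x| := G0_nonneg hp1 (abs_nonneg x)
  have hA0 : 0 ≤ |x| * ((|x| + 1) ^ (p - 1) - 1) :=
    mul_nonneg (abs_nonneg x) (g0_nonneg hp1 (abs_nonneg x))
  have hGfx : Gfun p x = ((|x| + 1) ^ p - 1) / p - |x| := rfl
  rw [hkey, hA, hGfx]
  set A := |x| * ((|x| + 1) ^ (p - 1) - 1) with hAdef
  set B := ((|x| + 1) ^ p - 1) / p - |x| with hBdef
  refine ⟨?_, ?_, ?_, ?_⟩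
  · rw [div_mul_eq_mul_div, div_le_iff₀ hp0]
    nlinarith [hC]
  · linarith
  · rw [div_mul_eq_mul_div, div_le_iff₀ hp0]
    nlinarith [hC, hB0, sq_nonneg (p - 1)]
  · linarith
end

section
/- Let p ∈ (1,2), g(y) = sgn(y)·((|y|+1)^(p-1) − 1), and G(x) = ((|x|+1)^p − 1)/p − |x|. There exists a constant C_p > 0 depending only on p such that for every absolutely continuous function z : [0,1] → ℝ with z(0) = 0 and ∫₀¹ G(z'(s)) ds < ∞, one has ∫₀¹ G(z(s)) ds ≤ C_p · ∫₀¹ G(z'(s)) ds. -/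
open MeasureTheory intervalIntegral

noncomputable def phifun (p t : ℝ) : ℝ := ((t + 1) ^ p - 1) / p - t

lemma Gfun_eq_phifun (p x : ℝ) : Gfun p x = phifun p |x| := rfl

lemma phifun_hasDerivAt {p : ℝ} {t : ℝ} (hp : 0 < p) (ht : 0 ≤ t) :
    HasDerivAt (phifun p) ((t + 1) ^ (p - 1) - 1) t := by
  have h0 : t + 1 ≠ 0 := by positivity
  have h1 : HasDerivAt (fun u : ℝ => (u + 1) ^ p) (p * (t + 1) ^ (p - 1) * 1) t := by
    exact (Real.hasDerivAt_rpow_const (x := t + 1) (p := p) (Or.inl h0)).comp t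
      ((hasDerivAt_id t).add_const 1)
  have h2 := ((h1.sub_const 1).div_const p).sub (hasDerivAt_id t)
  have hphi : phifun p = fun x : ℝ => ((x + 1) ^ p - 1) / p - id x := rfl
  rw [hphi]
  convert h2 using 1
  · rfl
  · rfl
  · rfl
  · field_simp

lemma phifun_continuousOn {p : ℝ} (hp : 0 < p) :
    ContinuousOn (phifun p) (Set.Ici 0) := fun x hx =>
  ((phifun_hasDerivAt hp hx).continuousAt).continuousWithinAt

lemma phifun_monotoneOn {p : ℝ} (hp1 : 1 < p) : MonotoneOn (phifun p) (Set.Ici 0) := by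
  have hp : 0 < p := lt_trans one_pos hp1
  apply monotoneOn_of_deriv_nonneg (convex_Ici 0) (phifun_continuousOn hp)
  · intro x hx
    rw [interior_Ici] at hx
    exact (phifun_hasDerivAt hp (le_of_lt hx)).differentiableAt.differentiableWithinAt
  · intro x hx
    rw [interior_Ici] at hx
    have hx' : (0:ℝ) < x := hx
    rw [(phifun_hasDerivAt hp (le_of_lt hx)).deriv]
    have : (1 : ℝ) ≤ (x + 1) ^ (p - 1) := Real.one_le_rpow (by linarith) (by linarith)
    linarith

lemma phifun_convexOn {p : ℝ} (hp1 : 1 < p) : ConvexOn ℝ (Set.Ici 0) (phifun p) := by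
  have hp : 0 < p := lt_trans one_pos hp1
  apply MonotoneOn.convexOn_of_deriv (convex_Ici 0) (phifun_continuousOn hp)
  · intro x hx
    rw [interior_Ici] at hx
    exact (phifun_hasDerivAt hp (le_of_lt hx)).differentiableAt.differentiableWithinAt
  · intro x hx y hy hxy
    rw [interior_Ici] at hx hy
    have hx' : (0:ℝ) < x := hx
    have hy' : (0:ℝ) < y := hy
    rw [(phifun_hasDerivAt hp (le_of_lt hx)).deriv, (phifun_hasDerivAt hp (le_of_lt hy)).deriv]
    have : (x + 1) ^ (p - 1) ≤ (y + 1) ^ (p - 1) :=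
      Real.rpow_le_rpow (by linarith) (by linarith) (by linarith)
    linarith

lemma abs_image_univ : (fun x : ℝ => |x|) '' Set.univ = Set.Ici 0 := by
  ext y
  constructor
  · rintro ⟨x, -, rfl⟩
    exact abs_nonneg x
  · intro hy
    exact ⟨y, Set.mem_univ y, abs_of_nonneg hy⟩

lemma Gfun_convexOn {p : ℝ} (hp1 : 1 < p) : ConvexOn ℝ Set.univ (Gfun p) := by
  have habs : ConvexOn ℝ Set.univ (fun x : ℝ => |x|) := by
    exact (convexOn_univ_norm : ConvexOn ℝ Set.univ (norm : ℝ → ℝ))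
  have hcomp : ConvexOn ℝ Set.univ ((phifun p) ∘ (fun x : ℝ => |x|)) := by
    apply ConvexOn.comp _ habs
    · rw [abs_image_univ]
      exact phifun_monotoneOn hp1
    · rw [abs_image_univ]
      exact phifun_convexOn hp1
  have : Gfun p = (phifun p) ∘ (fun x : ℝ => |x|) := by
    funext x; rfl
  rw [this]
  exact hcomp

lemma Gfun_continuous {p : ℝ} (hp : 0 < p) : Continuous (Gfun p) := by
  rw [continuous_iff_continuousAt]
  intro x
  have hb : ContinuousAt (fun y : ℝ => |y| + 1) x :=
    (continuous_abs.continuousAt).add continuousAt_const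
  have h0 : |x| + 1 ≠ 0 := by positivity
  have h1 : ContinuousAt (fun y : ℝ => (|y| + 1) ^ p) x :=
    hb.rpow_const (Or.inl h0)
  exact (((h1.sub continuousAt_const).div_const p).sub continuous_abs.continuousAt : _)

lemma Gfun_zero {p : ℝ} : Gfun p 0 = 0 := by
  simp [Gfun, Real.one_rpow]

lemma Gfun_nonneg {p : ℝ} (hp1 : 1 < p) (x : ℝ) : 0 ≤ Gfun p x := by
  rw [Gfun_eq_phifun]
  have h0 : phifun p 0 = 0 := by simp [phifun, Real.one_rpow]
  have := phifun_monotoneOn hp1 (Set.self_mem_Ici) (abs_nonneg x) (abs_nonneg x)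
  rw [h0] at this
  exact this

theorem poincare_type_G (p : ℝ) (hp1 : 1 < p) (hp2 : p < 2) :
    ∃ C : ℝ, 0 < C ∧ ∀ z z' : ℝ → ℝ,
      IntervalIntegrable z' volume 0 1 →
      (∀ x ∈ Set.Icc (0:ℝ) 1, z x = ∫ t in (0:ℝ)..x, z' t) →
      IntervalIntegrable (fun s => Gfun p (z' s)) volume 0 1 →
      ∫ s in (0:ℝ)..1, Gfun p (z s) ≤ C * ∫ s in (0:ℝ)..1, Gfun p (z' s) := by
  have hp : 0 < p := lt_trans one_pos hp1
  refine ⟨1, one_pos, ?_⟩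
  intro z z' hz' hz hG
  set K : ℝ := ∫ s in (0:ℝ)..1, Gfun p (z' s) with hKdef
  have hzint' : IntegrableOn z' (Set.Ioc 0 1) volume := hz'.1
  have hGint' : IntegrableOn (fun s => Gfun p (z' s)) (Set.Ioc 0 1) volume := hG.1
  haveI : IsProbabilityMeasure (volume.restrict (Set.Ioc (0:ℝ) 1)) :=
    ⟨by simp [Real.volume_Ioc]⟩
  set μ := volume.restrict (Set.Ioc (0:ℝ) 1) with hμ
  -- key pointwise bound
  have key : ∀ s ∈ Set.Icc (0:ℝ) 1, Gfun p (∫ t in (0:ℝ)..s, z' t) ≤ K := by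
    intro s hs
    set f : ℝ → ℝ := Set.indicator (Set.Ioc 0 s) z' with hf
    have hsub : Set.Ioc (0:ℝ) s ⊆ Set.Ioc 0 1 := Set.Ioc_subset_Ioc le_rfl hs.2
    have hrr : μ.restrict (Set.Ioc (0:ℝ) s) = volume.restrict (Set.Ioc (0:ℝ) s) := by
      rw [hμ, Measure.restrict_restrict measurableSet_Ioc,
        Set.inter_eq_self_of_subset_left hsub]
    have hfi : Integrable f μ := by
      rw [hf, MeasureTheory.integrable_indicator_iff measurableSet_Ioc]
      rw [IntegrableOn, hrr]
      exact hzint'.mono_set hsub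
    have hGf : (fun x => Gfun p (f x)) =
        Set.indicator (Set.Ioc 0 s) (fun t => Gfun p (z' t)) := by
      funext x
      by_cases hx : x ∈ Set.Ioc 0 s
      · simp [hf, Set.indicator_of_mem hx]
      · simp [hf, Set.indicator_of_notMem hx, Gfun_zero]
    have hGfi : Integrable (fun x => Gfun p (f x)) μ := by
      rw [hGf, MeasureTheory.integrable_indicator_iff measurableSet_Ioc, IntegrableOn, hrr]
      exact hGint'.mono_set hsub
    have hjen := (Gfun_convexOn hp1).map_integral_le (μ := μ)
      ((Gfun_continuous hp).continuousOn) isClosed_univ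
      (Filter.Eventually.of_forall fun x => Set.mem_univ _) hfi hGfi
    have hint_f : ∫ x, f x ∂μ = ∫ t in (0:ℝ)..s, z' t := by
      rw [hf, MeasureTheory.integral_indicator measurableSet_Ioc, hrr,
        intervalIntegral.integral_of_le hs.1]
    have hint_Gf : ∫ x, Gfun p (f x) ∂μ = ∫ x in Set.Ioc (0:ℝ) s, Gfun p (z' x) := by
      rw [hGf, MeasureTheory.integral_indicator measurableSet_Ioc, hrr]
    have hmono : ∫ x in Set.Ioc (0:ℝ) s, Gfun p (z' x)
        ≤ ∫ x in Set.Ioc (0:ℝ) 1, Gfun p (z' x) :=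
      setIntegral_mono_set hGint'
        (Filter.Eventually.of_forall fun x => Gfun_nonneg hp1 _)
        (HasSubset.Subset.eventuallyLE hsub)
    have hK1 : K = ∫ x in Set.Ioc (0:ℝ) 1, Gfun p (z' x) := by
      rw [hKdef, intervalIntegral.integral_of_le zero_le_one]
    rw [hint_f, hint_Gf] at hjen
    rw [hK1]
    exact le_trans hjen hmono
  -- replace z by the primitive on [0,1]
  have huIcc : Set.uIcc (0:ℝ) 1 = Set.Icc 0 1 := Set.uIcc_of_le zero_le_one
  have heq : ∫ s in (0:ℝ)..1, Gfun p (z s)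
      = ∫ s in (0:ℝ)..1, Gfun p (∫ t in (0:ℝ)..s, z' t) := by
    apply intervalIntegral.integral_congr
    intro x hx
    rw [huIcc] at hx
    simp only [hz x hx]
  have hFcont : ContinuousOn (fun x => ∫ t in (0:ℝ)..x, z' t) (Set.Icc 0 1) := by
    have hIcc : IntegrableOn z' (Set.Icc (0:ℝ) 1) volume :=
      (integrableOn_Icc_iff_integrableOn_Ioc).mpr hz'.1
    have := continuousOn_primitive_interval (a := (0:ℝ)) (b := 1) (μ := volume)
      (f := z') (by rw [huIcc]; exact hIcc)
    rwa [huIcc] at this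
  have hGFcont : ContinuousOn (fun x => Gfun p (∫ t in (0:ℝ)..x, z' t)) (Set.Icc 0 1) :=
    (Gfun_continuous hp).comp_continuousOn hFcont
  have hGFint : IntervalIntegrable (fun x => Gfun p (∫ t in (0:ℝ)..x, z' t)) volume 0 1 := by
    apply ContinuousOn.intervalIntegrable
    rwa [huIcc]
  rw [heq, one_mul]
  calc ∫ s in (0:ℝ)..1, Gfun p (∫ t in (0:ℝ)..s, z' t)
      ≤ ∫ _ in (0:ℝ)..1, K :=
        intervalIntegral.integral_mono_on zero_le_one hGFint intervalIntegrable_const key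
    _ = K := by simp
end

section
/- Let p ≥ 1, let a : [0,1] → ℝ be continuous and non-negative, and let ρ, ξ : ℝ₊ × [0,1] → ℝ be C¹ solutions of the system ρ_t − ρ_x = −(1/2)a(x)(ρ − ξ), ξ_t + ξ_x = (1/2)a(x)(ρ − ξ) with boundary conditions ρ(t,0) = ξ(t,0) and ρ(t,1) = ξ(t,1). Let F : ℝ → ℝ be a C¹ convex function and define Φ(t) = ∫₀¹ (F(ρ(t,x)) + F(ξ(t,x))) dx. Then Φ'(t) = −(1/2)·∫₀¹ a(x)(ρ − ξ)(F'(ρ) − F'(ξ)) dx ≤ 0, so Φ is non-increasing. -/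
open MeasureTheory intervalIntegral

/-- Partial derivative with respect to the first (time) variable. -/
noncomputable def pt (u : ℝ → ℝ → ℝ) (t x : ℝ) : ℝ := deriv (fun s => u s x) t

/-- Partial derivative with respect to the second (space) variable. -/
noncomputable def px (u : ℝ → ℝ → ℝ) (t x : ℝ) : ℝ := deriv (fun y => u t y) x

private lemma hasDerivAt_fst {u : ℝ → ℝ → ℝ} (hu : ContDiff ℝ 1 (Function.uncurry u))
    (t x : ℝ) :
    HasDerivAt (fun s => u s x) (fderiv ℝ (Function.uncurry u) (t, x) (1, 0)) t := by
  have h : HasFDerivAt (Function.uncurry u) (fderiv ℝ (Function.uncurry u) (t, x)) (t, x) :=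
    (hu.differentiable one_ne_zero (t, x)).hasFDerivAt
  have hline : HasDerivAt (fun s : ℝ => ((s, x) : ℝ × ℝ)) (1, 0) t := by
    simpa using (hasDerivAt_id t).prodMk (hasDerivAt_const t x)
  exact h.comp_hasDerivAt t hline

private lemma hasDerivAt_snd {u : ℝ → ℝ → ℝ} (hu : ContDiff ℝ 1 (Function.uncurry u))
    (t x : ℝ) :
    HasDerivAt (fun y => u t y) (fderiv ℝ (Function.uncurry u) (t, x) (0, 1)) x := by
  have h : HasFDerivAt (Function.uncurry u) (fderiv ℝ (Function.uncurry u) (t, x)) (t, x) :=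
    (hu.differentiable one_ne_zero (t, x)).hasFDerivAt
  have hline : HasDerivAt (fun y : ℝ => ((t, y) : ℝ × ℝ)) (0, 1) x := by
    simpa using (hasDerivAt_const x t).prodMk (hasDerivAt_id x)
  exact h.comp_hasDerivAt x hline

private lemma pt_eq {u : ℝ → ℝ → ℝ} (hu : ContDiff ℝ 1 (Function.uncurry u)) (t x : ℝ) :
    pt u t x = fderiv ℝ (Function.uncurry u) (t, x) (1, 0) :=
  (hasDerivAt_fst hu t x).deriv

private lemma px_eq {u : ℝ → ℝ → ℝ} (hu : ContDiff ℝ 1 (Function.uncurry u)) (t x : ℝ) :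
    px u t x = fderiv ℝ (Function.uncurry u) (t, x) (0, 1) :=
  (hasDerivAt_snd hu t x).deriv

private lemma cont_fderiv_apply {u : ℝ → ℝ → ℝ} (hu : ContDiff ℝ 1 (Function.uncurry u))
    (v : ℝ × ℝ) :
    Continuous (fun p : ℝ × ℝ => fderiv ℝ (Function.uncurry u) p v) :=
  (hu.continuous_fderiv one_ne_zero).clm_apply continuous_const

theorem convex_energy_nonincreasing
    (a : ℝ → ℝ) (ha : Continuous a) (ha0 : ∀ x, 0 ≤ a x)
    (ρ ξ : ℝ → ℝ → ℝ)
    (hρ : ContDiff ℝ 1 (Function.uncurry ρ)) (hξ : ContDiff ℝ 1 (Function.uncurry ξ))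
    (heq1 : ∀ t, 0 ≤ t → ∀ x ∈ Set.Icc (0:ℝ) 1,
      pt ρ t x - px ρ t x = -(1/2) * a x * (ρ t x - ξ t x))
    (heq2 : ∀ t, 0 ≤ t → ∀ x ∈ Set.Icc (0:ℝ) 1,
      pt ξ t x + px ξ t x = (1/2) * a x * (ρ t x - ξ t x))
    (hbc0 : ∀ t, 0 ≤ t → ρ t 0 = ξ t 0) (hbc1 : ∀ t, 0 ≤ t → ρ t 1 = ξ t 1)
    (F : ℝ → ℝ) (hF : ContDiff ℝ 1 F) (hFc : ConvexOn ℝ Set.univ F) :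
    ∀ t, 0 ≤ t →
      HasDerivAt (fun s => ∫ x in (0:ℝ)..1, (F (ρ s x) + F (ξ s x)))
        (-(1/2) * ∫ x in (0:ℝ)..1,
          a x * (ρ t x - ξ t x) * (deriv F (ρ t x) - deriv F (ξ t x))) t ∧
      -(1/2) * (∫ x in (0:ℝ)..1,
          a x * (ρ t x - ξ t x) * (deriv F (ρ t x) - deriv F (ξ t x))) ≤ 0 := by
  intro t ht
  have hρc : Continuous (Function.uncurry ρ) := hρ.continuous
  have hξc : Continuous (Function.uncurry ξ) := hξ.continuous
  have hρx : Continuous (fun x => ρ t x) := hρc.comp (continuous_const.prodMk continuous_id)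
  have hξx : Continuous (fun x => ξ t x) := hξc.comp (continuous_const.prodMk continuous_id)
  have hF' : Continuous (deriv F) := hF.continuous_deriv le_rfl
  have hFd : Differentiable ℝ F := hF.differentiable one_ne_zero
  -- monotonicity of deriv F
  have hmono : Monotone (deriv F) := by
    have := hFc.monotoneOn_deriv (fun x _ => hFd.differentiableAt)
    intro x y hxy
    exact this (Set.mem_univ x) (Set.mem_univ y) hxy
  -- the integrand of the claimed derivative
  set I : ℝ := ∫ x in (0:ℝ)..1, a x * (ρ t x - ξ t x) * (deriv F (ρ t x) - deriv F (ξ t x))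
    with hIdef
  -- sign part
  have hsign : 0 ≤ I := by
    apply intervalIntegral.integral_nonneg (by norm_num)
    intro x _
    have h2 : 0 ≤ (ρ t x - ξ t x) * (deriv F (ρ t x) - deriv F (ξ t x)) := by
      rcases le_total (ξ t x) (ρ t x) with h | h
      · exact mul_nonneg (by linarith) (by have := hmono h; linarith)
      · have := hmono h; nlinarith
    calc (0:ℝ) = a x * 0 := by ring
    _ ≤ a x * ((ρ t x - ξ t x) * (deriv F (ρ t x) - deriv F (ξ t x))) :=
        mul_le_mul_of_nonneg_left h2 (ha0 x)
    _ = a x * (ρ t x - ξ t x) * (deriv F (ρ t x) - deriv F (ξ t x)) := by ring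
  refine ⟨?_, by linarith⟩
  -- G is the integrand
  set G : ℝ → ℝ → ℝ := fun s x => F (ρ s x) + F (ξ s x) with hGdef
  have hG : ContDiff ℝ 1 (Function.uncurry G) := (hF.comp hρ).add (hF.comp hξ)
  set G' : ℝ → ℝ → ℝ := fun s x => fderiv ℝ (Function.uncurry G) (s, x) (1, 0) with hG'def
  have hG'cont : Continuous (fun p : ℝ × ℝ => G' p.1 p.2) := cont_fderiv_apply hG (1, 0)
  -- Step 1 : differentiation under the integral sign
  have key : HasDerivAt (fun s => ∫ x in (0:ℝ)..1, G s x) (∫ x in (0:ℝ)..1, G' t x) t := by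
    obtain ⟨C, hC⟩ := (isCompact_Icc.prod isCompact_Icc :
        IsCompact (Set.Icc (t-1) (t+1) ×ˢ Set.Icc (0:ℝ) 1)).exists_bound_of_continuousOn
      hG'cont.continuousOn
    have hGx : ∀ s : ℝ, Continuous (fun x => G s x) := fun s =>
      hG.continuous.comp (continuous_const.prodMk continuous_id)
    have := intervalIntegral.hasDerivAt_integral_of_dominated_loc_of_deriv_le
      (F := G) (F' := G') (x₀ := t) (bound := fun _ => C) (a := 0) (b := 1)
      (μ := volume) (s := Metric.ball t 1) (Metric.ball_mem_nhds t one_pos)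
      (Filter.Eventually.of_forall fun s => ((hGx s).aestronglyMeasurable))
      ((hGx t).intervalIntegrable 0 1)
      ((hG'cont.comp (continuous_const.prodMk continuous_id)).aestronglyMeasurable)
      (Filter.Eventually.of_forall ?_)
      (intervalIntegrable_const)
      (Filter.Eventually.of_forall ?_)
    · exact this.2
    · intro x hx s hs
      have hmem : ((s, x) : ℝ × ℝ) ∈ Set.Icc (t-1) (t+1) ×ˢ Set.Icc (0:ℝ) 1 := by
        simp only [Metric.mem_ball, Real.dist_eq] at hs
        rw [Set.uIoc_of_le (by norm_num : (0:ℝ) ≤ 1)] at hx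
        exact ⟨⟨by linarith [abs_lt.mp hs], by linarith [abs_lt.mp hs]⟩,
          ⟨le_of_lt hx.1, hx.2⟩⟩
      simpa using hC _ hmem
    · intro x _ s _
      exact hasDerivAt_fst hG s x
  -- Step 2 : identify the integral of G' t
  -- chain rule values
  have hGt : ∀ x : ℝ, G' t x =
      deriv F (ρ t x) * pt ρ t x + deriv F (ξ t x) * pt ξ t x := by
    intro x
    have h1 : HasDerivAt (fun s => ρ s x) (pt ρ t x) t := by
      simpa [pt_eq hρ t x] using hasDerivAt_fst hρ t x
    have h2 : HasDerivAt (fun s => ξ s x) (pt ξ t x) t := by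
      simpa [pt_eq hξ t x] using hasDerivAt_fst hξ t x
    have hc : HasDerivAt (fun s => G s x)
        (deriv F (ρ t x) * pt ρ t x + deriv F (ξ t x) * pt ξ t x) t := by
      have := ((hFd.differentiableAt.hasDerivAt.scomp t h1).add
        (hFd.differentiableAt.hasDerivAt.scomp t h2))
      simpa [mul_comm, Pi.add_def, Function.comp_def] using this
    exact (hasDerivAt_fst hG t x).unique hc
  -- space derivative definitions
  have hρxD : ∀ x : ℝ, HasDerivAt (fun y => ρ t y) (px ρ t x) x := fun x => by
    simpa [px_eq hρ t x] using hasDerivAt_snd hρ t x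
  have hξxD : ∀ x : ℝ, HasDerivAt (fun y => ξ t y) (px ξ t x) x := fun x => by
    simpa [px_eq hξ t x] using hasDerivAt_snd hξ t x
  set H : ℝ → ℝ := fun x => F (ρ t x) - F (ξ t x) with hHdef
  set H' : ℝ → ℝ := fun x =>
    deriv F (ρ t x) * px ρ t x - deriv F (ξ t x) * px ξ t x with hH'def
  have hHD : ∀ x : ℝ, HasDerivAt H (H' x) x := by
    intro x
    have := ((hFd.differentiableAt.hasDerivAt.scomp x (hρxD x)).sub
      (hFd.differentiableAt.hasDerivAt.scomp x (hξxD x)))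
    simpa [H, H', mul_comm, Pi.sub_def, Function.comp_def] using this
  -- continuity of px functions in x
  have hpxρ : Continuous (fun x => px ρ t x) := by
    have : (fun x => px ρ t x) = fun x => fderiv ℝ (Function.uncurry ρ) (t, x) (0, 1) := by
      funext x; exact px_eq hρ t x
    rw [this]
    exact (cont_fderiv_apply hρ (0,1)).comp (continuous_const.prodMk continuous_id)
  have hpxξ : Continuous (fun x => px ξ t x) := by
    have : (fun x => px ξ t x) = fun x => fderiv ℝ (Function.uncurry ξ) (t, x) (0, 1) := by
      funext x; exact px_eq hξ t x
    rw [this]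
    exact (cont_fderiv_apply hξ (0,1)).comp (continuous_const.prodMk continuous_id)
  have hH'cont : Continuous H' :=
    ((hF'.comp hρx).mul hpxρ).sub ((hF'.comp hξx).mul hpxξ)
  have hQcont : Continuous (fun x =>
      -(1/2) * (a x * (ρ t x - ξ t x) * (deriv F (ρ t x) - deriv F (ξ t x)))) :=
    continuous_const.mul ((ha.mul (hρx.sub hξx)).mul ((hF'.comp hρx).sub (hF'.comp hξx)))
  -- rewriting the integrand on [0,1]
  have hcongr : ∀ x ∈ Set.uIcc (0:ℝ) 1, G' t x =
      H' x + -(1/2) * (a x * (ρ t x - ξ t x) * (deriv F (ρ t x) - deriv F (ξ t x))) := by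
    intro x hx
    rw [Set.uIcc_of_le (by norm_num : (0:ℝ) ≤ 1)] at hx
    have e1 := heq1 t ht x hx
    have e2 := heq2 t ht x hx
    have eρ : pt ρ t x = px ρ t x - (1/2) * a x * (ρ t x - ξ t x) := by linarith
    have eξ : pt ξ t x = -px ξ t x + (1/2) * a x * (ρ t x - ξ t x) := by linarith
    rw [hGt x, eρ, eξ]
    simp only [H', hH'def]
    ring
  have hint : (∫ x in (0:ℝ)..1, G' t x) = -(1/2) * I := by
    rw [intervalIntegral.integral_congr hcongr]
    rw [intervalIntegral.integral_add (hH'cont.intervalIntegrable 0 1)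
      (hQcont.intervalIntegrable 0 1)]
    have hFTC : (∫ x in (0:ℝ)..1, H' x) = H 1 - H 0 :=
      intervalIntegral.integral_eq_sub_of_hasDerivAt (fun x _ => hHD x)
        (hH'cont.intervalIntegrable 0 1)
    have hH0 : H 1 - H 0 = 0 := by
      simp [H, hbc0 t ht, hbc1 t ht]
    rw [hFTC, hH0, zero_add, intervalIntegral.integral_const_mul]
  rw [hint] at key
  exact key
end

section
/- Let p > 1 and let z be a sufficiently regular solution of z_tt − z_xx + a(x)z_t = 0 on ℝ₊ × (0,1) with z(t,0) = z(t,1) = 0, where a is continuous and non-negative. Define E_p(t) = (1/p)∫₀¹ (|z_x + z_t|^p + |z_x − z_t|^p) dx. Then E_p'(t) = −(1/2)∫₀¹ a(x)(ρ − ξ)(⌊ρ⌉^(p−1) − ⌊ξ⌉^(p−1)) dx ≤ 0, where ρ = z_x + z_t, ξ = z_x − z_t and ⌊s⌉^r = sgn(s)|s|^r. -/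
open MeasureTheory intervalIntegral

/-- Signed power function ⌊s⌉^r = sgn(s)·|s|^r. -/
noncomputable def sgnPow (r s : ℝ) : ℝ := Real.sign s * |s| ^ r

namespace EnergyAux

open Function Set Filter

lemma sgnPow_zero' {r : ℝ} : sgnPow r 0 = 0 := by simp [sgnPow]

lemma sgnPow_of_nonneg {r s : ℝ} (hr : 0 < r) (hs : 0 ≤ s) : sgnPow r s = s ^ r := by
  rcases eq_or_lt_of_le hs with h | h
  · simp [sgnPow, ← h, Real.zero_rpow hr.ne']
  · rw [sgnPow, Real.sign_of_pos h, abs_of_pos h, one_mul]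

lemma sgnPow_of_neg {r s : ℝ} (hs : s < 0) : sgnPow r s = -(|s| ^ r) := by
  rw [sgnPow, Real.sign_of_neg hs]; ring

lemma sgnPow_mono {r : ℝ} (hr : 0 < r) : Monotone (sgnPow r) := by
  intro u v huv
  rcases le_or_gt 0 u with hu | hu
  · rw [sgnPow_of_nonneg hr hu, sgnPow_of_nonneg hr (hu.trans huv)]
    exact Real.rpow_le_rpow hu huv hr.le
  · rcases le_or_gt 0 v with hv | hv
    · rw [sgnPow_of_neg hu, sgnPow_of_nonneg hr hv]
      have h1 : 0 ≤ |u| ^ r := Real.rpow_nonneg (abs_nonneg u) r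
      have h2 : 0 ≤ v ^ r := Real.rpow_nonneg hv r
      linarith
    · rw [sgnPow_of_neg hu, sgnPow_of_neg hv]
      have h0 : |v| ≤ |u| := by rw [abs_of_neg hu, abs_of_neg hv]; linarith
      have := Real.rpow_le_rpow (abs_nonneg v) h0 hr.le
      linarith

lemma sgnPow_mul_nonneg {r : ℝ} (hr : 0 < r) (u v : ℝ) :
    0 ≤ (u - v) * (sgnPow r u - sgnPow r v) := by
  rcases le_total u v with h | h
  · have := sgnPow_mono hr h
    nlinarith
  · have := sgnPow_mono hr h
    apply mul_nonneg <;> linarith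

lemma continuous_abs_rpow {r : ℝ} (hr : 0 ≤ r) : Continuous fun s : ℝ => |s| ^ r := by
  rw [continuous_iff_continuousAt]
  intro s
  exact (Real.continuousAt_rpow_const _ _ (Or.inr hr)).comp continuous_abs.continuousAt

lemma continuous_sgnPow {r : ℝ} (hr : 0 < r) : Continuous (sgnPow r) := by
  have habs : Continuous fun s : ℝ => |s| ^ r := continuous_abs_rpow hr.le
  rw [continuous_iff_continuousAt]
  intro s
  rcases lt_trichotomy s 0 with hs | rfl | hs
  · have hev : ∀ᶠ u in nhds s, (fun u : ℝ => -(|u| ^ r)) u = sgnPow r u := by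
      filter_upwards [isOpen_Iio.eventually_mem (show s ∈ Iio (0:ℝ) from hs)] with u hu
      exact (sgnPow_of_neg hu).symm
    exact (habs.continuousAt.neg).congr hev
  · have h0 : Tendsto (sgnPow r) (nhds 0) (nhds 0) := by
      apply squeeze_zero_norm (a := fun u : ℝ => |u| ^ r)
      · intro u
        have h1 : |Real.sign u| ≤ 1 := by
          rcases lt_trichotomy u 0 with h | h | h <;>
            simp [Real.sign_of_neg, Real.sign_of_pos, h]
        have h2 : 0 ≤ |u| ^ r := Real.rpow_nonneg (abs_nonneg u) r
        calc ‖sgnPow r u‖ = |Real.sign u| * |u| ^ r := by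
              rw [sgnPow, Real.norm_eq_abs, abs_mul, abs_of_nonneg h2]
          _ ≤ 1 * |u| ^ r := by apply mul_le_mul_of_nonneg_right h1 h2
          _ = |u| ^ r := one_mul _
      · have := habs.tendsto 0
        simpa [Real.zero_rpow hr.ne'] using this
    rw [ContinuousAt, sgnPow_zero']
    exact h0
  · have hev : ∀ᶠ u in nhds s, (fun u : ℝ => |u| ^ r) u = sgnPow r u := by
      filter_upwards [isOpen_Ioi.eventually_mem (show s ∈ Ioi (0:ℝ) from hs)] with u hu
      rw [sgnPow_of_nonneg hr hu.le, abs_of_pos hu]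
    exact habs.continuousAt.congr hev

lemma hasDerivAt_abs_rpow {p : ℝ} (hp : 1 < p) (s : ℝ) :
    HasDerivAt (fun u : ℝ => |u| ^ p) (p * sgnPow (p - 1) s) s := by
  have hp1 : (0:ℝ) < p - 1 := by linarith
  rcases eq_or_ne s 0 with rfl | hs
  · rw [sgnPow_zero', mul_zero, hasDerivAt_iff_tendsto_slope]
    apply squeeze_zero_norm' (a := fun u : ℝ => |u| ^ (p - 1))
    · filter_upwards [self_mem_nhdsWithin] with u hu
      have hu' : u ≠ 0 := hu
      have h1 : |u| ≠ 0 := abs_ne_zero.2 hu'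
      have h2 : (0:ℝ) < |u| := abs_pos.2 hu'
      have : slope (fun u : ℝ => |u| ^ p) 0 u = |u| ^ p / u := by
        simp [slope_def_field, Real.zero_rpow (by linarith : p ≠ 0)]
      rw [this, Real.norm_eq_abs, abs_div, abs_of_nonneg (Real.rpow_nonneg (abs_nonneg u) p),
      ]
      rw [Real.rpow_sub h2, Real.rpow_one]
    · have h := (continuous_abs_rpow hp1.le).continuousAt (x := (0:ℝ))
      have : |(0:ℝ)| ^ (p-1) = 0 := by simp [Real.zero_rpow hp1.ne']
      rw [ContinuousAt, this] at h
      exact h.mono_left nhdsWithin_le_nhds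
  · have h1 : HasDerivAt (fun x : ℝ => x ^ p) (p * |s| ^ (p - 1)) |s| :=
      Real.hasDerivAt_rpow_const (Or.inl (abs_ne_zero.2 hs))
    have h2 := hasDerivAt_abs hs
    have h3 := h1.comp s h2
    refine HasDerivAt.congr_deriv h3 ?_; symm
    rcases hs.lt_or_gt with h | h
    · rw [sgnPow_of_neg h]
      simp [sign_neg h]
    · rw [sgnPow_of_nonneg hp1 h.le, abs_of_pos h]
      simp [sign_pos h]

lemma hasDerivAt_slice1 {f : ℝ × ℝ → ℝ} {q : ℝ × ℝ} (hf : DifferentiableAt ℝ f q) :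
    HasDerivAt (fun s => f (s, q.2)) (fderiv ℝ f q (1, 0)) q.1 := by
  have hl : HasDerivAt (fun s : ℝ => (s, q.2)) ((1 : ℝ), (0 : ℝ)) q.1 :=
    (hasDerivAt_id q.1).prodMk (hasDerivAt_const q.1 q.2)
  exact hf.hasFDerivAt.comp_hasDerivAt_of_eq (x := _) hl rfl

lemma hasDerivAt_slice2 {f : ℝ × ℝ → ℝ} {q : ℝ × ℝ} (hf : DifferentiableAt ℝ f q) :
    HasDerivAt (fun y => f (q.1, y)) (fderiv ℝ f q (0, 1)) q.2 := by
  have hl : HasDerivAt (fun y : ℝ => (q.1, y)) ((0 : ℝ), (1 : ℝ)) q.2 :=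
    (hasDerivAt_const q.2 q.1).prodMk (hasDerivAt_id q.2)
  exact hf.hasFDerivAt.comp_hasDerivAt_of_eq (x := _) hl rfl

lemma fderiv_apply_const {c : ℝ × ℝ → ((ℝ × ℝ) →L[ℝ] ℝ)} {q : ℝ × ℝ}
    (hc : DifferentiableAt ℝ c q) (v w : ℝ × ℝ) :
    fderiv ℝ (fun y => c y v) q w = fderiv ℝ c q w v := by
  have := fderiv_clm_apply hc (differentiableAt_const v)
  rw [this]
  simp

lemma deriv_zero_of_zero_on_Ici {f : ℝ → ℝ} {t : ℝ} (ht : 0 ≤ t)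
    (hd : DifferentiableAt ℝ f t) (h0 : ∀ s, 0 ≤ s → f s = 0) : deriv f t = 0 := by
  have hu : UniqueDiffWithinAt ℝ (Set.Ici (0:ℝ)) t := uniqueDiffOn_Ici 0 t (Set.mem_Ici.2 ht)
  have h1 : derivWithin f (Set.Ici (0:ℝ)) t = deriv f t := hd.derivWithin hu
  have h2 : derivWithin f (Set.Ici (0:ℝ)) t = derivWithin (fun _ => (0:ℝ)) (Set.Ici 0) t :=
    derivWithin_congr (fun y hy => h0 y hy) (h0 t ht)
  rw [← h1, h2]
  exact congrFun (derivWithin_fun_const _ _) t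

variable {F : ℝ × ℝ → ℝ}

lemma hasDeriv_fderiv_t (hF : ContDiff ℝ 2 F) (v : ℝ × ℝ) (s x : ℝ) :
    HasDerivAt (fun σ => fderiv ℝ F (σ, x) v) (fderiv ℝ (fderiv ℝ F) (s, x) (1, 0) v) s := by
  have hf' : ContDiff ℝ 1 (fderiv ℝ F) := hF.fderiv_right (by norm_num)
  have h := hasDerivAt_slice1 (f := fun q => fderiv ℝ F q v) (q := (s, x))
    ((hf'.clm_apply contDiff_const).differentiable one_ne_zero _)
  rwa [fderiv_apply_const (hf'.differentiable one_ne_zero _) v ((1:ℝ), (0:ℝ))] at h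

lemma hasDeriv_fderiv_x (hF : ContDiff ℝ 2 F) (v : ℝ × ℝ) (s x : ℝ) :
    HasDerivAt (fun y => fderiv ℝ F (s, y) v) (fderiv ℝ (fderiv ℝ F) (s, x) (0, 1) v) x := by
  have hf' : ContDiff ℝ 1 (fderiv ℝ F) := hF.fderiv_right (by norm_num)
  have h := hasDerivAt_slice2 (f := fun q => fderiv ℝ F q v) (q := (s, x))
    ((hf'.clm_apply contDiff_const).differentiable one_ne_zero _)
  rwa [fderiv_apply_const (hf'.differentiable one_ne_zero _) v ((0:ℝ), (1:ℝ))] at h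

lemma pt_eq {z : ℝ → ℝ → ℝ} (hF : Differentiable ℝ (Function.uncurry z)) (s x : ℝ) :
    pt z s x = fderiv ℝ (Function.uncurry z) (s, x) (1, 0) :=
  (hasDerivAt_slice1 (hF (s, x))).deriv

lemma px_eq {z : ℝ → ℝ → ℝ} (hF : Differentiable ℝ (Function.uncurry z)) (s x : ℝ) :
    px z s x = fderiv ℝ (Function.uncurry z) (s, x) (0, 1) :=
  (hasDerivAt_slice2 (hF (s, x))).deriv

lemma ptpt_eq {z : ℝ → ℝ → ℝ} (hz : ContDiff ℝ 2 (Function.uncurry z)) (t x : ℝ) :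
    pt (pt z) t x = fderiv ℝ (fderiv ℝ (Function.uncurry z)) (t, x) (1, 0) (1, 0) := by
  have hFd : Differentiable ℝ (Function.uncurry z) := hz.differentiable (by norm_num)
  have h1 : (fun s => pt z s x) = fun s => fderiv ℝ (Function.uncurry z) (s, x) (1, 0) :=
    funext fun s => pt_eq hFd s x
  show deriv (fun s => pt z s x) t = _
  rw [h1]
  exact (hasDeriv_fderiv_t hz (1, 0) t x).deriv

lemma pxpx_eq {z : ℝ → ℝ → ℝ} (hz : ContDiff ℝ 2 (Function.uncurry z)) (t x : ℝ) :
    px (px z) t x = fderiv ℝ (fderiv ℝ (Function.uncurry z)) (t, x) (0, 1) (0, 1) := by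
  have hFd : Differentiable ℝ (Function.uncurry z) := hz.differentiable (by norm_num)
  have h1 : (fun y => px z t y) = fun y => fderiv ℝ (Function.uncurry z) (t, y) (0, 1) :=
    funext fun y => px_eq hFd t y
  show deriv (fun y => px z t y) x = _
  rw [h1]
  exact (hasDeriv_fderiv_x hz (0, 1) t x).deriv

end EnergyAux

open EnergyAux in
theorem energy_derivative_formula (p : ℝ) (hp : 1 < p)
    (a : ℝ → ℝ) (ha : Continuous a) (ha0 : ∀ x, 0 ≤ a x)
    (z : ℝ → ℝ → ℝ) (hz : ContDiff ℝ 2 (Function.uncurry z))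
    (hpde : ∀ t, 0 ≤ t → ∀ x ∈ Set.Icc (0:ℝ) 1,
      pt (pt z) t x - px (px z) t x + a x * pt z t x = 0)
    (hbc0 : ∀ t, 0 ≤ t → z t 0 = 0) (hbc1 : ∀ t, 0 ≤ t → z t 1 = 0) :
    ∀ t, 0 ≤ t →
      HasDerivAt (fun s => (1/p) * ∫ x in (0:ℝ)..1,
          (|px z s x + pt z s x| ^ p + |px z s x - pt z s x| ^ p))
        (-(1/2) * ∫ x in (0:ℝ)..1,
          a x * ((px z t x + pt z t x) - (px z t x - pt z t x)) *
            (sgnPow (p-1) (px z t x + pt z t x) - sgnPow (p-1) (px z t x - pt z t x))) t ∧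
      -(1/2) * (∫ x in (0:ℝ)..1,
          a x * ((px z t x + pt z t x) - (px z t x - pt z t x)) *
            (sgnPow (p-1) (px z t x + pt z t x) - sgnPow (p-1) (px z t x - pt z t x))) ≤ 0 := by
  intro t ht
  have hp0 : (0:ℝ) < p := by linarith
  have hp1 : (0:ℝ) < p - 1 := by linarith
  have hFd : Differentiable ℝ (Function.uncurry z) := hz.differentiable (by norm_num)
  have hf' : ContDiff ℝ 1 (fderiv ℝ (Function.uncurry z)) := hz.fderiv_right (by norm_num)
  have hgcont : ∀ v : ℝ × ℝ, Continuous (fun q : ℝ × ℝ => fderiv ℝ (Function.uncurry z) q v) :=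
    fun v => hf'.continuous.clm_apply continuous_const
  have hD2c : ∀ w v : ℝ × ℝ,
      Continuous (fun q : ℝ × ℝ => fderiv ℝ (fderiv ℝ (Function.uncurry z)) q w v) :=
    fun w v => ((hf'.continuous_fderiv one_ne_zero).clm_apply continuous_const).clm_apply
      continuous_const
  have hpt : ∀ s x : ℝ, pt z s x = fderiv ℝ (Function.uncurry z) (s, x) (1, 0) := pt_eq hFd
  have hpx : ∀ s x : ℝ, px z s x = fderiv ℝ (Function.uncurry z) (s, x) (0, 1) := px_eq hFd
  have hR : ∀ s x : ℝ, px z s x + pt z s x = fderiv ℝ (Function.uncurry z) (s, x) (1, 1) := by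
    intro s x
    rw [hpt, hpx, show ((1:ℝ), (1:ℝ)) = ((0:ℝ), (1:ℝ)) + ((1:ℝ), (0:ℝ)) by norm_num,
      ContinuousLinearMap.map_add]
  have hX : ∀ s x : ℝ, px z s x - pt z s x = fderiv ℝ (Function.uncurry z) (s, x) (-1, 1) := by
    intro s x
    rw [hpt, hpx, show ((-1:ℝ), (1:ℝ)) = ((0:ℝ), (1:ℝ)) - ((1:ℝ), (0:ℝ)) by norm_num,
      ContinuousLinearMap.map_sub]
  have hexpA : ∀ x : ℝ, ∀ w : ℝ × ℝ,
      fderiv ℝ (fderiv ℝ (Function.uncurry z)) (t, x) w (1, 1)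
        = fderiv ℝ (fderiv ℝ (Function.uncurry z)) (t, x) w (1, 0)
          + fderiv ℝ (fderiv ℝ (Function.uncurry z)) (t, x) w (0, 1) := by
    intro x w
    rw [show ((1:ℝ), (1:ℝ)) = ((1:ℝ), (0:ℝ)) + ((0:ℝ), (1:ℝ)) by norm_num,
      ContinuousLinearMap.map_add]
  have hexpS : ∀ x : ℝ, ∀ w : ℝ × ℝ,
      fderiv ℝ (fderiv ℝ (Function.uncurry z)) (t, x) w (-1, 1)
        = fderiv ℝ (fderiv ℝ (Function.uncurry z)) (t, x) w (0, 1)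
          - fderiv ℝ (fderiv ℝ (Function.uncurry z)) (t, x) w (1, 0) := by
    intro x w
    rw [show ((-1:ℝ), (1:ℝ)) = ((0:ℝ), (1:ℝ)) - ((1:ℝ), (0:ℝ)) by norm_num,
      ContinuousLinearMap.map_sub]
  have hsym : ∀ x : ℝ,
      fderiv ℝ (fderiv ℝ (Function.uncurry z)) (t, x) (1, 0) (0, 1)
        = fderiv ℝ (fderiv ℝ (Function.uncurry z)) (t, x) (0, 1) (1, 0) :=
    fun x => (hz.contDiffAt.isSymmSndFDerivAt (by simp)) (1, 0) (0, 1)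
  have hRt_eq : ∀ x ∈ Set.Icc (0:ℝ) 1,
      fderiv ℝ (fderiv ℝ (Function.uncurry z)) (t, x) (1, 0) (1, 1)
        = fderiv ℝ (fderiv ℝ (Function.uncurry z)) (t, x) (0, 1) (1, 1) - a x * pt z t x := by
    intro x hx
    have hp' := hpde t ht x hx
    rw [ptpt_eq hz t x, pxpx_eq hz t x] at hp'
    rw [hexpA x (1, 0), hexpA x (0, 1)]
    have := hsym x
    linarith
  have hXt_eq : ∀ x ∈ Set.Icc (0:ℝ) 1,
      fderiv ℝ (fderiv ℝ (Function.uncurry z)) (t, x) (1, 0) (-1, 1)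
        = -(fderiv ℝ (fderiv ℝ (Function.uncurry z)) (t, x) (0, 1) (-1, 1))
          + a x * pt z t x := by
    intro x hx
    have hp' := hpde t ht x hx
    rw [ptpt_eq hz t x, pxpx_eq hz t x] at hp'
    rw [hexpS x (1, 0), hexpS x (0, 1)]
    have := hsym x
    linarith
  have hb0 : pt z t 0 = 0 :=
    deriv_zero_of_zero_on_Ici ht (hasDerivAt_slice1 (hFd ((t, 0) : ℝ × ℝ))).differentiableAt
      (fun s hs => hbc0 s hs)
  have hb1 : pt z t 1 = 0 :=
    deriv_zero_of_zero_on_Ici ht (hasDerivAt_slice1 (hFd ((t, 1) : ℝ × ℝ))).differentiableAt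
      (fun s hs => hbc1 s hs)
  have hline : Continuous fun x : ℝ => ((t, x) : ℝ × ℝ) := continuous_const.prodMk continuous_id
  -- FTC part
  have hW'cont : Continuous fun x : ℝ =>
      p * sgnPow (p - 1) (fderiv ℝ (Function.uncurry z) (t, x) (1, 1))
          * fderiv ℝ (fderiv ℝ (Function.uncurry z)) (t, x) (0, 1) (1, 1)
        - p * sgnPow (p - 1) (fderiv ℝ (Function.uncurry z) (t, x) (-1, 1))
          * fderiv ℝ (fderiv ℝ (Function.uncurry z)) (t, x) (0, 1) (-1, 1) :=
    ((continuous_const.mul ((continuous_sgnPow hp1).comp ((hgcont (1, 1)).comp hline))).mul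
        ((hD2c (0, 1) (1, 1)).comp hline)).sub
      ((continuous_const.mul ((continuous_sgnPow hp1).comp ((hgcont (-1, 1)).comp hline))).mul
        ((hD2c (0, 1) (-1, 1)).comp hline))
  have hWder : ∀ x : ℝ, HasDerivAt (fun y : ℝ =>
        |fderiv ℝ (Function.uncurry z) (t, y) (1, 1)| ^ p
          - |fderiv ℝ (Function.uncurry z) (t, y) (-1, 1)| ^ p)
      (p * sgnPow (p - 1) (fderiv ℝ (Function.uncurry z) (t, x) (1, 1))
          * fderiv ℝ (fderiv ℝ (Function.uncurry z)) (t, x) (0, 1) (1, 1)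
        - p * sgnPow (p - 1) (fderiv ℝ (Function.uncurry z) (t, x) (-1, 1))
          * fderiv ℝ (fderiv ℝ (Function.uncurry z)) (t, x) (0, 1) (-1, 1)) x := fun x =>
    ((hasDerivAt_abs_rpow hp _).comp x (hasDeriv_fderiv_x hz (1, 1) t x)).sub
      ((hasDerivAt_abs_rpow hp _).comp x (hasDeriv_fderiv_x hz (-1, 1) t x))
  have hFTC : (∫ x in (0:ℝ)..1,
      (p * sgnPow (p - 1) (fderiv ℝ (Function.uncurry z) (t, x) (1, 1))
          * fderiv ℝ (fderiv ℝ (Function.uncurry z)) (t, x) (0, 1) (1, 1)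
        - p * sgnPow (p - 1) (fderiv ℝ (Function.uncurry z) (t, x) (-1, 1))
          * fderiv ℝ (fderiv ℝ (Function.uncurry z)) (t, x) (0, 1) (-1, 1))) = 0 := by
    rw [intervalIntegral.integral_eq_sub_of_hasDerivAt (fun x _ => hWder x)
      (hW'cont.intervalIntegrable 0 1)]
    have e0 : fderiv ℝ (Function.uncurry z) (t, 0) (1, 1)
        = fderiv ℝ (Function.uncurry z) (t, 0) (-1, 1) := by
      rw [← hR t 0, ← hX t 0, hb0]; ring
    have e1 : fderiv ℝ (Function.uncurry z) (t, 1) (1, 1)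
        = fderiv ℝ (Function.uncurry z) (t, 1) (-1, 1) := by
      rw [← hR t 1, ← hX t 1, hb1]; ring
    rw [e0, e1]; ring
  -- differentiation under the integral sign
  have hΦc : ∀ s : ℝ, Continuous fun x : ℝ =>
      |fderiv ℝ (Function.uncurry z) (s, x) (1, 1)| ^ p
        + |fderiv ℝ (Function.uncurry z) (s, x) (-1, 1)| ^ p := by
    intro s
    have hl : Continuous fun x : ℝ => ((s, x) : ℝ × ℝ) := continuous_const.prodMk continuous_id
    exact ((continuous_abs_rpow hp0.le).comp ((hgcont (1, 1)).comp hl)).add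
      ((continuous_abs_rpow hp0.le).comp ((hgcont (-1, 1)).comp hl))
  have hΦ'ucont : Continuous fun q : ℝ × ℝ =>
      p * sgnPow (p - 1) (fderiv ℝ (Function.uncurry z) q (1, 1))
          * fderiv ℝ (fderiv ℝ (Function.uncurry z)) q (1, 0) (1, 1)
        + p * sgnPow (p - 1) (fderiv ℝ (Function.uncurry z) q (-1, 1))
          * fderiv ℝ (fderiv ℝ (Function.uncurry z)) q (1, 0) (-1, 1) :=
    ((continuous_const.mul ((continuous_sgnPow hp1).comp (hgcont (1, 1)))).mul
        (hD2c (1, 0) (1, 1))).add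
      ((continuous_const.mul ((continuous_sgnPow hp1).comp (hgcont (-1, 1)))).mul
        (hD2c (1, 0) (-1, 1)))
  obtain ⟨C, hC⟩ := (IsCompact.prod isCompact_Icc isCompact_Icc :
      IsCompact (Set.Icc (t-1) (t+1) ×ˢ Set.Icc (0:ℝ) 1)).exists_bound_of_continuousOn
    hΦ'ucont.continuousOn
  have key := intervalIntegral.hasDerivAt_integral_of_dominated_loc_of_deriv_le
    (μ := MeasureTheory.volume)
    (F := fun s x => |fderiv ℝ (Function.uncurry z) (s, x) (1, 1)| ^ p
        + |fderiv ℝ (Function.uncurry z) (s, x) (-1, 1)| ^ p)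
    (F' := fun s x => p * sgnPow (p - 1) (fderiv ℝ (Function.uncurry z) (s, x) (1, 1))
          * fderiv ℝ (fderiv ℝ (Function.uncurry z)) (s, x) (1, 0) (1, 1)
        + p * sgnPow (p - 1) (fderiv ℝ (Function.uncurry z) (s, x) (-1, 1))
          * fderiv ℝ (fderiv ℝ (Function.uncurry z)) (s, x) (1, 0) (-1, 1))
    (x₀ := t) (bound := fun _ => C) (a := (0:ℝ)) (b := 1) (s := Metric.ball t 1) (Metric.ball_mem_nhds t one_pos)
    (Filter.Eventually.of_forall fun s => (hΦc s).aestronglyMeasurable)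
    ((hΦc t).intervalIntegrable 0 1)
    (Continuous.aestronglyMeasurable (hΦ'ucont.comp hline))
    (Filter.Eventually.of_forall fun x hx s hs => by
      have hxI : x ∈ Set.Icc (0:ℝ) 1 := Set.Ioc_subset_Icc_self
        (by rwa [Set.uIoc_of_le (by norm_num : (0:ℝ) ≤ 1)] at hx)
      have h' : |s - t| < 1 := by
        have := Metric.mem_ball.mp hs
        rwa [Real.dist_eq] at this
      have habs := abs_lt.mp h'
      have hsI : s ∈ Set.Icc (t-1) (t+1) := ⟨by linarith [habs.1], by linarith [habs.2]⟩
      exact hC (s, x) ⟨hsI, hxI⟩)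
    intervalIntegrable_const
    (Filter.Eventually.of_forall fun x hx s hs =>
      ((hasDerivAt_abs_rpow hp _).comp s (hasDeriv_fderiv_t hz (1, 1) s x)).add
        ((hasDerivAt_abs_rpow hp _).comp s (hasDeriv_fderiv_t hz (-1, 1) s x)))
  have hder := key.2.const_mul (1/p)
  -- value computations
  have hptc : Continuous fun x : ℝ => pt z t x := by
    have hh : (fun x : ℝ => pt z t x) = fun x => fderiv ℝ (Function.uncurry z) (t, x) (1, 0) :=
      funext fun x => hpt t x
    rw [hh]; exact (hgcont (1, 0)).comp hline
  have hBfcont : Continuous fun x : ℝ => a x * pt z t x *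
      (sgnPow (p - 1) (fderiv ℝ (Function.uncurry z) (t, x) (1, 1))
        - sgnPow (p - 1) (fderiv ℝ (Function.uncurry z) (t, x) (-1, 1))) :=
    (ha.mul hptc).mul
      (((continuous_sgnPow hp1).comp ((hgcont (1, 1)).comp hline)).sub
        ((continuous_sgnPow hp1).comp ((hgcont (-1, 1)).comp hline)))
  have hval : (∫ x in (0:ℝ)..1,
        (p * sgnPow (p - 1) (fderiv ℝ (Function.uncurry z) (t, x) (1, 1))
            * fderiv ℝ (fderiv ℝ (Function.uncurry z)) (t, x) (1, 0) (1, 1)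
          + p * sgnPow (p - 1) (fderiv ℝ (Function.uncurry z) (t, x) (-1, 1))
            * fderiv ℝ (fderiv ℝ (Function.uncurry z)) (t, x) (1, 0) (-1, 1)))
      = -(p * ∫ x in (0:ℝ)..1, a x * pt z t x *
          (sgnPow (p - 1) (fderiv ℝ (Function.uncurry z) (t, x) (1, 1))
            - sgnPow (p - 1) (fderiv ℝ (Function.uncurry z) (t, x) (-1, 1)))) := by
    have hsplit : Set.EqOn
        (fun x : ℝ => p * sgnPow (p - 1) (fderiv ℝ (Function.uncurry z) (t, x) (1, 1))
            * fderiv ℝ (fderiv ℝ (Function.uncurry z)) (t, x) (1, 0) (1, 1)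
          + p * sgnPow (p - 1) (fderiv ℝ (Function.uncurry z) (t, x) (-1, 1))
            * fderiv ℝ (fderiv ℝ (Function.uncurry z)) (t, x) (1, 0) (-1, 1))
        (fun x : ℝ => (p * sgnPow (p - 1) (fderiv ℝ (Function.uncurry z) (t, x) (1, 1))
            * fderiv ℝ (fderiv ℝ (Function.uncurry z)) (t, x) (0, 1) (1, 1)
          - p * sgnPow (p - 1) (fderiv ℝ (Function.uncurry z) (t, x) (-1, 1))
            * fderiv ℝ (fderiv ℝ (Function.uncurry z)) (t, x) (0, 1) (-1, 1))
          - p * (a x * pt z t x *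
            (sgnPow (p - 1) (fderiv ℝ (Function.uncurry z) (t, x) (1, 1))
              - sgnPow (p - 1) (fderiv ℝ (Function.uncurry z) (t, x) (-1, 1)))))
        (Set.uIcc (0:ℝ) 1) := by
      intro x hx
      have hx' : x ∈ Set.Icc (0:ℝ) 1 := by
        rwa [Set.uIcc_of_le (by norm_num : (0:ℝ) ≤ 1)] at hx
      simp only
      rw [hRt_eq x hx', hXt_eq x hx']
      ring
    rw [intervalIntegral.integral_congr hsplit,
      intervalIntegral.integral_sub (hW'cont.intervalIntegrable 0 1)
        ((hBfcont.intervalIntegrable 0 1).const_mul p),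
      hFTC, intervalIntegral.integral_const_mul]
    ring
  have hT : (∫ x in (0:ℝ)..1,
        a x * ((px z t x + pt z t x) - (px z t x - pt z t x)) *
          (sgnPow (p-1) (px z t x + pt z t x) - sgnPow (p-1) (px z t x - pt z t x)))
      = 2 * ∫ x in (0:ℝ)..1, a x * pt z t x *
          (sgnPow (p - 1) (fderiv ℝ (Function.uncurry z) (t, x) (1, 1))
            - sgnPow (p - 1) (fderiv ℝ (Function.uncurry z) (t, x) (-1, 1))) := by
    rw [← intervalIntegral.integral_const_mul]
    apply intervalIntegral.integral_congr
    intro x _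
    simp only
    rw [hR t x, hX t x,
      show fderiv ℝ (Function.uncurry z) (t, x) (1, 1)
          - fderiv ℝ (Function.uncurry z) (t, x) (-1, 1) = 2 * pt z t x by
        rw [← hR t x, ← hX t x]; ring]
    ring
  constructor
  · have hfun : (fun s => (1/p) * ∫ x in (0:ℝ)..1,
        (|px z s x + pt z s x| ^ p + |px z s x - pt z s x| ^ p))
        = fun s => (1/p) * ∫ x in (0:ℝ)..1,
          (|fderiv ℝ (Function.uncurry z) (s, x) (1, 1)| ^ p
            + |fderiv ℝ (Function.uncurry z) (s, x) (-1, 1)| ^ p) := by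
      funext s
      congr 1
      apply intervalIntegral.integral_congr
      intro x _
      simp only
      rw [hR s x, hX s x]
    rw [hfun]
    have hvT : -(1/2) * (∫ x in (0:ℝ)..1,
        a x * ((px z t x + pt z t x) - (px z t x - pt z t x)) *
          (sgnPow (p-1) (px z t x + pt z t x) - sgnPow (p-1) (px z t x - pt z t x)))
        = 1/p * ∫ x in (0:ℝ)..1,
          (p * sgnPow (p - 1) (fderiv ℝ (Function.uncurry z) (t, x) (1, 1))
              * fderiv ℝ (fderiv ℝ (Function.uncurry z)) (t, x) (1, 0) (1, 1)
            + p * sgnPow (p - 1) (fderiv ℝ (Function.uncurry z) (t, x) (-1, 1))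
              * fderiv ℝ (fderiv ℝ (Function.uncurry z)) (t, x) (1, 0) (-1, 1)) := by
      rw [hT, hval]
      field_simp
    rw [show (-(1/2) * ∫ x in (0:ℝ)..1,
        a x * ((px z t x + pt z t x) - (px z t x - pt z t x)) *
          (sgnPow (p-1) (px z t x + pt z t x) - sgnPow (p-1) (px z t x - pt z t x))) = _ from hvT]
    exact hder
  · have hnn : 0 ≤ ∫ x in (0:ℝ)..1,
        a x * ((px z t x + pt z t x) - (px z t x - pt z t x)) *
          (sgnPow (p-1) (px z t x + pt z t x) - sgnPow (p-1) (px z t x - pt z t x)) := by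
      apply intervalIntegral.integral_nonneg (by norm_num)
      intro u hu
      rw [mul_assoc]
      exact mul_nonneg (ha0 u) (sgnPow_mul_nonneg hp1 _ _)
    linarith
end

section
/- Let p ≥ 2, q = p/(p−1), and let v be the solution of v'' = β·⌊z⌉^(p−1) on (0,1) with v(0) = v(1) = 0, where 0 ≤ β ≤ 1 is continuous and z ∈ W^{1,p}_0(0,1). Then there exists a constant C_p depending only on p such that ∫₀¹ |v(x)|^q dx ≤ C_p · (1/p)∫₀¹ |z'(x)|^p dx. -/
open MeasureTheory intervalIntegral Set

/-- One-sided barrier bound: if `v'' ≥ -M` on `(0,1)`, `v(0)=v(1)=0`, then `v ≤ M`. -/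
lemma le_of_second_deriv_aux (v v' v'' : ℝ → ℝ) (M : ℝ) (hM : 0 ≤ M)
    (hc : ContinuousOn v (Icc 0 1)) (h0 : v 0 = 0) (h1 : v 1 = 0)
    (hd : ∀ x ∈ Ioo (0:ℝ) 1, HasDerivAt v (v' x) x)
    (hd2 : ∀ x ∈ Ioo (0:ℝ) 1, HasDerivAt v' (v'' x) x)
    (hb : ∀ x ∈ Ioo (0:ℝ) 1, -M ≤ v'' x) :
    ∀ x ∈ Icc (0:ℝ) 1, v x ≤ M := by
  set g : ℝ → ℝ := fun x => v x + M / 2 * x ^ 2 with hgdef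
  have hgc : ContinuousOn g (Icc 0 1) :=
    hc.add (Continuous.continuousOn (by continuity))
  have hconv : ConvexOn ℝ (Icc (0:ℝ) 1) g := by
    apply convexOn_of_hasDerivWithinAt2_nonneg (convex_Icc 0 1) hgc
      (f' := fun x => v' x + M * x) (f'' := fun x => v'' x + M)
    · intro x hx
      rw [interior_Icc] at hx
      have hpow : HasDerivAt (fun y : ℝ => M / 2 * y ^ 2) (M * x) x := by
        have h := (hasDerivAt_pow 2 x).const_mul (M / 2)
        refine h.congr_deriv ?_
        push_cast
        ring
      exact ((hd x hx).add hpow).hasDerivWithinAt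
    · intro x hx
      rw [interior_Icc] at hx
      have hlin : HasDerivAt (fun y : ℝ => M * y) M x := by
        simpa using (hasDerivAt_id x).const_mul M
      exact ((hd2 x hx).add hlin).hasDerivWithinAt
    · intro x hx
      rw [interior_Icc] at hx
      linarith [hb x hx]
  intro x hx
  have h01 : (0:ℝ) ∈ Icc (0:ℝ) 1 := by constructor <;> norm_num
  have h11 : (1:ℝ) ∈ Icc (0:ℝ) 1 := by constructor <;> norm_num
  have ha : (0:ℝ) ≤ 1 - x := by linarith [hx.2]
  have hbx : (0:ℝ) ≤ x := hx.1
  have hsum : (1 - x) + x = 1 := by ring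
  have hcv := hconv.2 h01 h11 ha hbx hsum
  simp only [smul_eq_mul, mul_zero, mul_one, zero_add] at hcv
  -- hcv : g x ≤ (1 - x) * g 0 + x * g 1
  have hg0 : g 0 = 0 := by simp [hgdef, h0]
  have hg1 : g 1 = M / 2 := by simp [hgdef, h1]
  rw [hg0, hg1] at hcv
  have hgx : g x = v x + M / 2 * x ^ 2 := rfl
  nlinarith [hx.1, hx.2, sq_nonneg x]

/-- Two-sided bound from the one-sided one. -/
lemma abs_le_of_second_deriv_aux (v v' v'' : ℝ → ℝ) (M : ℝ) (hM : 0 ≤ M)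
    (hc : ContinuousOn v (Icc 0 1)) (h0 : v 0 = 0) (h1 : v 1 = 0)
    (hd : ∀ x ∈ Ioo (0:ℝ) 1, HasDerivAt v (v' x) x)
    (hd2 : ∀ x ∈ Ioo (0:ℝ) 1, HasDerivAt v' (v'' x) x)
    (hb : ∀ x ∈ Ioo (0:ℝ) 1, |v'' x| ≤ M) :
    ∀ x ∈ Icc (0:ℝ) 1, |v x| ≤ M := by
  intro x hx
  have h₁ := le_of_second_deriv_aux v v' v'' M hM hc h0 h1 hd hd2
    (fun y hy => by linarith [(abs_le.mp (hb y hy)).1]) x hx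
  have h₂ := le_of_second_deriv_aux (fun y => -v y) (fun y => -v' y) (fun y => -v'' y) M hM
    hc.neg (by simp [h0]) (by simp [h1]) (fun y hy => (hd y hy).neg) (fun y hy => (hd2 y hy).neg)
    (fun y hy => neg_le_neg (abs_le.mp (hb y hy)).2) x hx
  rw [abs_le]
  exact ⟨by linarith, h₁⟩

theorem Lq_bound_elliptic_multiplier (p : ℝ) (hp : 2 ≤ p) :
    ∃ C : ℝ, 0 < C ∧
      ∀ β z z' v : ℝ → ℝ,
        ContinuousOn β (Icc 0 1) → (∀ x ∈ Icc (0:ℝ) 1, β x ∈ Icc (0:ℝ) 1) →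
        IntervalIntegrable z' volume 0 1 →
        IntervalIntegrable (fun x => |z' x| ^ p) volume 0 1 →
        (∀ x ∈ Icc (0:ℝ) 1, z x = ∫ t in (0:ℝ)..x, z' t) →
        z 1 = 0 →
        ContinuousOn v (Icc 0 1) → v 0 = 0 → v 1 = 0 →
        (∀ x ∈ Ioo (0:ℝ) 1, HasDerivAt v (deriv v x) x) →
        (∀ x ∈ Ioo (0:ℝ) 1, HasDerivAt (deriv v) (β x * sgnPow (p - 1) (z x)) x) →
        ∫ x in (0:ℝ)..1, |v x| ^ (p / (p - 1)) ≤
          C * ((1 / p) * ∫ x in (0:ℝ)..1, |z' x| ^ p) := by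
  have hp0 : (0:ℝ) < p := by linarith
  have hp1 : (1:ℝ) < p := by linarith
  have hpm : (0:ℝ) < p - 1 := by linarith
  refine ⟨p, hp0, ?_⟩
  intro β z z' v hβc hβ hz'i hzpi hz hz1 hvc hv0 hv1 hvd hvd2
  set q : ℝ := p / (p - 1) with hq
  have hq0 : 0 < q := div_pos hp0 hpm
  set A : ℝ := ∫ x in (0:ℝ)..1, |z' x| with hA
  set I : ℝ := ∫ x in (0:ℝ)..1, |z' x| ^ p with hI
  have hz'abs : IntervalIntegrable (fun x => |z' x|) volume 0 1 := hz'i.abs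
  have hA0 : 0 ≤ A :=
    intervalIntegral.integral_nonneg zero_le_one (fun x _ => abs_nonneg _)
  have hI0 : 0 ≤ I :=
    intervalIntegral.integral_nonneg zero_le_one (fun x _ => Real.rpow_nonneg (abs_nonneg _) _)
  -- pointwise bound on z
  have hzb : ∀ x ∈ Icc (0:ℝ) 1, |z x| ≤ A := by
    intro x hx
    rw [hz x hx]
    calc |∫ t in (0:ℝ)..x, z' t| ≤ ∫ t in (0:ℝ)..x, |z' t| :=
          intervalIntegral.abs_integral_le_integral_abs hx.1
      _ ≤ A := intervalIntegral.integral_mono_interval le_rfl hx.1 hx.2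
          (Filter.Eventually.of_forall fun t => abs_nonneg _) hz'abs
  set M : ℝ := A ^ (p - 1) with hM
  have hM0 : 0 ≤ M := Real.rpow_nonneg hA0 _
  -- bound on v via the barrier lemma
  have hvb : ∀ x ∈ Icc (0:ℝ) 1, |v x| ≤ M := by
    apply abs_le_of_second_deriv_aux v (deriv v) (fun x => β x * sgnPow (p - 1) (z x)) M hM0
      hvc hv0 hv1 hvd hvd2
    intro x hx
    have hx' : x ∈ Icc (0:ℝ) 1 := Ioo_subset_Icc_self hx
    have hsign : |Real.sign (z x)| ≤ 1 := by
      rcases Real.sign_apply_eq (z x) with h | h | h <;> rw [h] <;> norm_num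
    have hβx := hβ x hx'
    have hβ1 : |β x| ≤ 1 := abs_le.mpr ⟨by linarith [hβx.1], hβx.2⟩
    have hzr : (0:ℝ) ≤ |z x| ^ (p - 1) := Real.rpow_nonneg (abs_nonneg _) _
    have h1 : |β x * sgnPow (p - 1) (z x)| ≤ |z x| ^ (p - 1) := by
      rw [sgnPow, abs_mul, abs_mul, abs_of_nonneg hzr]
      calc |β x| * (|Real.sign (z x)| * |z x| ^ (p - 1))
          ≤ 1 * (1 * |z x| ^ (p - 1)) := by
            apply mul_le_mul hβ1 _ (mul_nonneg (abs_nonneg _) hzr) zero_le_one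
            exact mul_le_mul_of_nonneg_right hsign hzr
        _ = |z x| ^ (p - 1) := by ring
    have h2 : |z x| ^ (p - 1) ≤ M :=
      Real.rpow_le_rpow (abs_nonneg _) (hzb x hx') hpm.le
    exact h1.trans h2
  -- integrate the bound on |v|^q
  have hvq_cont : ContinuousOn (fun x => |v x| ^ q) (Icc 0 1) :=
    hvc.abs.rpow_const (fun x _ => Or.inr hq0.le)
  have hle1 : ∫ x in (0:ℝ)..1, |v x| ^ q ≤ ∫ x in (0:ℝ)..1, M ^ q := by
    apply intervalIntegral.integral_mono_on zero_le_one
      (ContinuousOn.intervalIntegrable (by rw [uIcc_of_le zero_le_one]; exact hvq_cont))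
      intervalIntegrable_const
    intro x hx
    exact Real.rpow_le_rpow (abs_nonneg _) (hvb x hx) hq0.le
  have hconst : ∫ x in (0:ℝ)..1, M ^ q = M ^ q := by simp
  -- Hölder: A ≤ I^(1/p)
  have key : A ≤ I ^ (1 / p) := by
    rw [hA, hI, intervalIntegral.integral_of_le zero_le_one,
      intervalIntegral.integral_of_le zero_le_one]
    set μ : Measure ℝ := volume.restrict (Ioc (0:ℝ) 1) with hμ
    haveI : IsFiniteMeasure μ := ⟨by rw [hμ, Measure.restrict_apply_univ]; simp [Real.volume_Ioc]⟩
    have hpq : p.HolderConjugate q := Real.HolderConjugate.conjExponent hp1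
    have hint : Integrable (fun x => |z' x| ^ p) μ := hzpi.1
    have hmeas : AEStronglyMeasurable z' μ := hz'i.1.aestronglyMeasurable
    have hne0 : ENNReal.ofReal p ≠ 0 := by
      simp only [ne_eq, ENNReal.ofReal_eq_zero, not_le]; linarith
    have hnet : ENNReal.ofReal p ≠ ⊤ := ENNReal.ofReal_ne_top
    have hmem : MemLp z' (ENNReal.ofReal p) μ := by
      apply (memLp_norm_rpow_iff hmeas hne0 hnet).mp
      rw [ENNReal.div_self hne0 hnet, memLp_one_iff_integrable,
        ENNReal.toReal_ofReal hp0.le]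
      simpa [Real.norm_eq_abs] using hint
    have hg : MemLp (fun _ : ℝ => (1:ℝ)) (ENNReal.ofReal q) μ := memLp_const 1
    have hmain := integral_mul_norm_le_Lp_mul_Lq (μ := μ) hpq hmem hg
    have hμuniv : ∫ _ : ℝ, (1:ℝ) ∂μ = 1 := by
      rw [MeasureTheory.integral_const, smul_eq_mul, mul_one, hμ, measureReal_restrict_apply_univ]
      simp [Real.volume_Ioc]
    simp only [norm_one, mul_one, Real.norm_eq_abs, Real.one_rpow, hμuniv,
      Real.one_rpow] at hmain
    exact hmain
  have hAI : A ^ p ≤ I := by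
    calc A ^ p ≤ (I ^ (1 / p)) ^ p := Real.rpow_le_rpow hA0 key hp0.le
      _ = I := by
          rw [← Real.rpow_mul hI0, one_div, inv_mul_cancel₀ hp0.ne', Real.rpow_one]
  have hMq : M ^ q = A ^ p := by
    rw [hM, ← Real.rpow_mul hA0]
    congr 1
    rw [hq]
    field_simp
  calc ∫ x in (0:ℝ)..1, |v x| ^ q ≤ ∫ x in (0:ℝ)..1, M ^ q := hle1
    _ = M ^ q := hconst
    _ = A ^ p := hMq
    _ ≤ I := hAI
    _ = p * (1 / p * I) := by field_simp
end
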